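/- arXiv:1806.09876 — 11 statements merged into one kernel-verified Lean document; each statement's English description precedes it below -/
import Mathlib

section
/- Let G be a group acting by homeomorphisms on a nonempty compact Hausdorff connected topological space X which is regular, i.e. every point of X has a neighborhood basis consisting of open sets with finite frontier. Then for every finite open cover 𝒜 of X and every sequence (s_n)_{n≥1} of elements of G, if N_n denotes the minimal cardinality of a subfamily of the cover {s_1·A_1 ∩ … ∩ s_n·A_n : A_1,…,A_n ∈ 𝒜} of X that still covers X, then (log N_n)/n tends to 0 as n → ∞. (Hence every action of a group on a regular continuum has zero topological sequence entropy, i.e. is null.) -/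
open Pointwise Filter Topology Set

/-! Refine the cover to a finite cover `𝒱` by open sets with finite frontiers, and let `F` be the
finite union of these frontiers. For each point `p`, the member `W p = ⋂ᵢ sᵢ • Vᵢ(p)` of the join of
the translates `sᵢ • 𝒱` through `p` has `closure (W p) ⊆ W p ∪ ⋃ᵢ sᵢ • F`, a set with at most
`n · #F` points. Hence the union of the `W p` over these points and one extra point is clopen and
nonempty, so by connectedness it is everything: the `n`-th join has a subcover of size at most
`n · #F + 1`, and `log (n · #F + 1) / n → 0`. -/

section Topology

variable {X : Type*} [TopologicalSpace X]

theorem closure_iInter_subset_iInter_union_frontier {ι : Sort*} (U : ι → Set X) :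
    closure (⋂ i, U i) ⊆ (⋂ i, U i) ∪ ⋃ i, frontier (U i) := by
  intro z hz
  by_cases hfr : z ∈ ⋃ i, frontier (U i)
  · exact Or.inr hfr
  refine Or.inl (mem_iInter.2 fun i => interior_subset ?_)
  have hzcl : z ∈ closure (U i) := closure_mono (iInter_subset _ i) hz
  rw [closure_eq_interior_union_frontier] at hzcl
  exact hzcl.resolve_right fun h => hfr (mem_iUnion.2 ⟨i, h⟩)

theorem biUnion_eq_univ_of_closure_subset_union [PreconnectedSpace X] {W : X → Set X}
    {S F : Set X} (hS : S.Finite) (hSne : S.Nonempty) (hFS : F ⊆ S)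
    (hWopen : ∀ p ∈ S, IsOpen (W p)) (hmem : ∀ p ∈ S, p ∈ W p)
    (hcl : ∀ p ∈ S, closure (W p) ⊆ W p ∪ F) :
    ⋃ p ∈ S, W p = univ := by
  have hF : F ⊆ ⋃ p ∈ S, W p := fun p hp => mem_biUnion (hFS hp) (hmem p (hFS hp))
  have hclosed : IsClosed (⋃ p ∈ S, W p) := by
    rw [← closure_subset_iff_isClosed, hS.closure_biUnion]
    exact iUnion₂_subset fun p hp =>
      (hcl p hp).trans (union_subset (subset_biUnion_of_mem hp) hF)
  obtain ⟨p, hp⟩ := hSne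
  exact IsClopen.eq_univ ⟨hclosed, isOpen_biUnion hWopen⟩ ⟨p, mem_biUnion hp (hmem p hp)⟩

theorem exists_finite_refinement_of_frontier_finite [CompactSpace X]
    (hreg : ∀ x : X, ∀ W ∈ 𝓝 x, ∃ V : Set X, IsOpen V ∧ x ∈ V ∧ V ⊆ W ∧ (frontier V).Finite)
    {𝒜 : Set (Set X)} (h𝒜open : ∀ A ∈ 𝒜, IsOpen A) (h𝒜cov : ⋃₀ 𝒜 = univ) :
    ∃ 𝒱 : Set (Set X), 𝒱.Finite ∧ ⋃₀ 𝒱 = univ ∧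
      ∀ V ∈ 𝒱, IsOpen V ∧ (frontier V).Finite ∧ ∃ A ∈ 𝒜, V ⊆ A := by
  have hsmall : ∀ x : X, ∃ V : Set X, (IsOpen V ∧ x ∈ V) ∧ (frontier V).Finite ∧ ∃ A ∈ 𝒜, V ⊆ A := by
    intro x
    obtain ⟨A, hA, hxA⟩ := mem_sUnion.1 (h𝒜cov ▸ mem_univ x)
    obtain ⟨V, hVopen, hxV, hVA, hVfr⟩ := hreg x A ((h𝒜open A hA).mem_nhds hxA)
    exact ⟨V, ⟨hVopen, hxV⟩, hVfr, A, hA, hVA⟩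
  choose V hV hVfr hVA using hsmall
  obtain ⟨t, -, ht⟩ := isCompact_univ.elim_nhds_subcover V fun x _ => (hV x).1.mem_nhds (hV x).2
  refine ⟨V '' t, t.finite_toSet.image V, ?_, ?_⟩
  · rw [sUnion_image]
    exact univ_subset_iff.1 ht
  · rintro _ ⟨x, -, rfl⟩
    exact ⟨(hV x).1, hVfr x, hVA x⟩

end Topology

section SequenceJoin

variable {G X : Type*} [Group G] [TopologicalSpace X] [MulAction G X]

/-- The join `⋁_{i=1}^n s_i 𝒜`; the index `i : Fin n` stands for `s (i + 1)`. -/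
def joinCover (s : ℕ → G) (𝒜 : Set (Set X)) (n : ℕ) : Set (Set X) :=
  {B | ∃ f : Fin n → Set X, (∀ i, f i ∈ 𝒜) ∧ B = ⋂ i, s (i.1 + 1) • f i}

variable [ContinuousConstSMul G X]

theorem frontier_smul_set (g : G) (S : Set X) : frontier (g • S) = g • frontier S :=
  ((Homeomorph.smul g).image_frontier S).symm

theorem exists_subcover_joinCover_ncard_le [ConnectedSpace X] {𝒜 𝒱 : Set (Set X)}
    (h𝒱cov : ⋃₀ 𝒱 = univ) (h𝒱 : ∀ V ∈ 𝒱, IsOpen V ∧ ∃ A ∈ 𝒜, V ⊆ A)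
    {F : Set X} (hF : F.Finite) (hfr : ∀ V ∈ 𝒱, frontier V ⊆ F) (s : ℕ → G) (n : ℕ) :
    ∃ 𝓑 ⊆ joinCover s 𝒜 n, ⋃₀ 𝓑 = univ ∧ 𝓑.Finite ∧ 𝓑.ncard ≤ F.ncard * n + 1 := by
  choose c hc𝒱 hc using fun y => mem_sUnion.1 (h𝒱cov ▸ mem_univ y)
  choose! a ha𝒜 haV using fun V hV => (h𝒱 V hV).2
  set Fn : Set X := ⋃ i : Fin n, s (i.1 + 1) • F
  have hFn : Fn.Finite := finite_iUnion fun _ => hF.smul_set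
  have hFn_card : Fn.ncard ≤ F.ncard * n :=
    (ncard_iUnion_le_of_fintype _).trans (by simp [ncard_smul_set, mul_comm])
  -- `v p i` is the member of `𝒱` through `sᵢ⁻¹ • p`, so that `p ∈ sᵢ • v p i`.
  set v : X → Fin n → Set X := fun p i => c ((s (i.1 + 1))⁻¹ • p)
  set W : X → Set X := fun p => ⋂ i, s (i.1 + 1) • v p i
  set B : X → Set X := fun p => ⋂ i, s (i.1 + 1) • a (v p i)
  have hmem : ∀ p, p ∈ W p := fun p =>
    mem_iInter.2 fun i => mem_smul_set_iff_inv_smul_mem.2 (hc _)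
  have hWopen : ∀ p, IsOpen (W p) := fun p =>
    isOpen_iInter_of_finite fun i => ((h𝒱 _ (hc𝒱 _)).1).smul _
  have hcl : ∀ p, closure (W p) ⊆ W p ∪ Fn := fun p =>
    (closure_iInter_subset_iInter_union_frontier _).trans <| union_subset_union_right _ <|
      iUnion_mono fun i => by
        rw [frontier_smul_set]
        exact smul_set_mono (hfr _ (hc𝒱 _))
  obtain ⟨x₀⟩ := ConnectedSpace.toNonempty (α := X)
  have hcover : ⋃ p ∈ insert x₀ Fn, W p = univ :=
    biUnion_eq_univ_of_closure_subset_union (hFn.insert x₀) (insert_nonempty _ _)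
      (subset_insert _ _) (fun p _ => hWopen p) (fun p _ => hmem p) (fun p _ => hcl p)
  refine ⟨B '' insert x₀ Fn, ?_, ?_, (hFn.insert x₀).image B, ?_⟩
  · rintro _ ⟨p, -, rfl⟩
    exact ⟨fun i => a (v p i), fun i => ha𝒜 _ (hc𝒱 _), rfl⟩
  · refine univ_subset_iff.1 (hcover ▸ iUnion₂_subset fun p hp => ?_)
    exact (iInter_mono fun i => smul_set_mono (haV _ (hc𝒱 _))).trans
      (subset_sUnion_of_mem (mem_image_of_mem B hp))
  · calc (B '' insert x₀ Fn).ncard ≤ (insert x₀ Fn).ncard := ncard_image_le (hFn.insert x₀)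
      _ ≤ Fn.ncard + 1 := ncard_insert_le _ _
      _ ≤ F.ncard * n + 1 := by omega

end SequenceJoin

theorem tendsto_log_div_of_le_mul_add {u : ℕ → ℕ} {C : ℕ}
    (hu : ∀ᶠ n in atTop, u n ≤ C * n + 1) :
    Tendsto (fun n : ℕ => Real.log (u n) / n) atTop (𝓝 0) := by
  have hC : (0 : ℝ) < C + 1 := by positivity
  have hlin : Tendsto (fun n : ℕ => Real.log ((C + 1) * n) / n) atTop (𝓝 0) := by
    refine ((Real.tendsto_pow_log_div_mul_add_atTop (C + 1)⁻¹ 0 1 (inv_ne_zero hC.ne')).comp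
      (tendsto_natCast_atTop_atTop.const_mul_atTop hC)).congr fun n => ?_
    simp [hC.ne']
  refine tendsto_of_tendsto_of_tendsto_of_le_of_le' tendsto_const_nhds hlin
    (Eventually.of_forall fun n => div_nonneg (Real.log_natCast_nonneg _) n.cast_nonneg) ?_
  filter_upwards [hu, eventually_ge_atTop 1] with n hun hn
  have hlog : Real.log (u n) ≤ Real.log ((C + 1) * n) := by
    have hle : (u n : ℝ) ≤ (C + 1) * n := by
      have : u n ≤ (C + 1) * n := by nlinarith
      exact_mod_cast this
    rcases (u n).eq_zero_or_pos with h0 | hpos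
    · rw [h0, Nat.cast_zero, Real.log_zero]
      exact Real.log_nonneg (by nlinarith [(Nat.one_le_cast (α := ℝ)).2 hn])
    · exact Real.log_le_log (by exact_mod_cast hpos) hle
  exact div_le_div_of_nonneg_right hlog n.cast_nonneg

theorem stmt_0_general {G X : Type*} [Group G] [TopologicalSpace X] [CompactSpace X]
    [ConnectedSpace X] [MulAction G X] [ContinuousConstSMul G X]
    (hreg : ∀ x : X, ∀ W ∈ nhds x, ∃ V : Set X, IsOpen V ∧ x ∈ V ∧ V ⊆ W ∧ (frontier V).Finite)
    (𝒜 : Set (Set X)) (h𝒜open : ∀ A ∈ 𝒜, IsOpen A)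
    (h𝒜cov : ⋃₀ 𝒜 = Set.univ)
    (s : ℕ → G) (N : ℕ → ℕ)
    (hN : ∀ n : ℕ, 1 ≤ n → IsLeast {k : ℕ | ∃ 𝓑 : Set (Set X),
        (∀ B ∈ 𝓑, ∃ f : Fin n → Set X, (∀ i, f i ∈ 𝒜) ∧ B = ⋂ i, s (i.1 + 1) • f i) ∧
        ⋃₀ 𝓑 = Set.univ ∧ 𝓑.Finite ∧ 𝓑.ncard = k} (N n)) :
    Tendsto (fun n : ℕ => Real.log (N n) / n) atTop (𝓝 0) := by
  obtain ⟨𝒱, h𝒱fin, h𝒱cov, h𝒱⟩ := exists_finite_refinement_of_frontier_finite hreg h𝒜open h𝒜cov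
  have hF : (⋃ V ∈ 𝒱, frontier V).Finite := h𝒱fin.biUnion fun V hV => (h𝒱 V hV).2.1
  refine tendsto_log_div_of_le_mul_add (C := (⋃ V ∈ 𝒱, frontier V).ncard) (eventually_atTop.2 ⟨1, fun n hn => ?_⟩)
  obtain ⟨𝓑, h𝓑, hcov, hfin, hcard⟩ := exists_subcover_joinCover_ncard_le h𝒱cov
    (fun V hV => ⟨(h𝒱 V hV).1, (h𝒱 V hV).2.2⟩) hF (fun V hV => subset_biUnion_of_mem hV) s n
  exact ((hN n hn).2 ⟨𝓑, h𝓑, hcov, hfin, rfl⟩).trans hcard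

/-- Every action of a group on a regular (rim-finite) continuum has zero
topological sequence entropy: for every finite open cover `𝒜` and every sequence `s` in `G`,
if `N n` is the minimal cardinality of a subcover of `⋁_{i=1}^n s_i 𝒜`, then
`(log N n)/n → 0`. -/
theorem stmt_0 {G X : Type*} [Group G] [TopologicalSpace X] [CompactSpace X] [T2Space X]
    [ConnectedSpace X] [Nonempty X] [MulAction G X] [ContinuousConstSMul G X]
    (hreg : ∀ x : X, ∀ W ∈ nhds x, ∃ V : Set X, IsOpen V ∧ x ∈ V ∧ V ⊆ W ∧ (frontier V).Finite)
    (𝒜 : Set (Set X)) (h𝒜fin : 𝒜.Finite) (h𝒜open : ∀ A ∈ 𝒜, IsOpen A)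
    (h𝒜cov : ⋃₀ 𝒜 = Set.univ)
    (s : ℕ → G) (N : ℕ → ℕ)
    (hN : ∀ n : ℕ, 1 ≤ n → IsLeast {k : ℕ | ∃ 𝓑 : Set (Set X),
        (∀ B ∈ 𝓑, ∃ f : Fin n → Set X, (∀ i, f i ∈ 𝒜) ∧ B = ⋂ i, s (i.1 + 1) • f i) ∧
        ⋃₀ 𝓑 = Set.univ ∧ 𝓑.Finite ∧ 𝓑.ncard = k} (N n)) :
    Tendsto (fun n : ℕ => Real.log (N n) / n) atTop (𝓝 0) :=
  stmt_0_general hreg 𝒜 h𝒜open h𝒜cov s N hN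
end

section
/- Let X be a compact Hausdorff connected topological space and let 𝒜 be an open cover of X with at least two members that admits no proper subcover (i.e., no proper subfamily of 𝒜 covers X). Let P be the union of the frontiers of the members of 𝒜. Then 𝒜 is finite and the cardinality of 𝒜 is at most the cardinality of P. -/
/-- If `𝒜` is an open cover (with at least two members) of a continuum `X`
admitting no proper subcover, then `𝒜` is finite and its cardinality is at most the
cardinality of the set `P` of boundary points of the members of `𝒜`. -/
theorem stmt_1 {X : Type*} [TopologicalSpace X] [CompactSpace X] [T2Space X] [ConnectedSpace X]
    (𝒜 : Set (Set X)) (hopen : ∀ A ∈ 𝒜, IsOpen A) (hcov : ⋃₀ 𝒜 = Set.univ)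
    (htwo : ∃ A ∈ 𝒜, ∃ B ∈ 𝒜, A ≠ B)
    (hmin : ∀ 𝓑 ⊆ 𝒜, ⋃₀ 𝓑 = Set.univ → 𝓑 = 𝒜) :
    𝒜.Finite ∧ Cardinal.mk ↥𝒜 ≤ Cardinal.mk ↥(⋃ A ∈ 𝒜, frontier A) := by
  -- Finiteness from compactness + minimality
  have hfin : 𝒜.Finite := by
    obtain ⟨t, ht⟩ := isCompact_univ.elim_finite_subcover
      (fun A : 𝒜 => (A : Set X)) (fun A => hopen A A.2)
      (by rw [← Set.sUnion_eq_iUnion, hcov])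
    have hsub : (Subtype.val '' (t : Set 𝒜)) ⊆ 𝒜 := by
      rintro x ⟨a, _, rfl⟩; exact a.2
    have hcover : ⋃₀ (Subtype.val '' (t : Set 𝒜)) = Set.univ := by
      apply Set.eq_univ_of_univ_subset
      intro x hx
      obtain ⟨A, hA, hxA⟩ := Set.mem_iUnion₂.mp (ht hx)
      exact ⟨A, ⟨A, hA, rfl⟩, hxA⟩
    have := hmin _ hsub hcover
    rw [← this]
    exact (t.finite_toSet.image _)
  refine ⟨hfin, ?_⟩
  -- for each A ∈ 𝒜, the rest does not cover
  have hF : ∀ A ∈ 𝒜, (Set.univ \ ⋃₀ (𝒜 \ {A})).Nonempty := by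
    intro A hA
    by_contra h
    rw [Set.not_nonempty_iff_eq_empty, Set.diff_eq_empty] at h
    have hcov' : ⋃₀ (𝒜 \ {A}) = Set.univ := Set.univ_subset_iff.mp h
    have := hmin _ Set.diff_subset hcov'
    have hA' : A ∈ 𝒜 \ {A} := by rw [this]; exact hA
    exact hA'.2 rfl
  -- each member of 𝒜 is nonempty
  have hne : ∀ B ∈ 𝒜, B.Nonempty := by
    intro B hB
    obtain ⟨x, hx⟩ := hF B hB
    have hxcov : x ∈ ⋃₀ 𝒜 := hcov ▸ Set.mem_univ x
    obtain ⟨C, hC, hxC⟩ := hxcov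
    rcases eq_or_ne C B with rfl | hCB
    · exact ⟨x, hxC⟩
    · exact absurd ⟨C, ⟨hC, hCB⟩, hxC⟩ hx.2
  -- key point selection
  have key : ∀ A : ↥𝒜, ∃ p : X, p ∈ (⋃ B ∈ 𝒜, frontier B) ∧
      p ∈ (A : Set X) ∧ ∀ C ∈ 𝒜, C ≠ (A : Set X) → p ∉ C := by
    rintro ⟨A, hA⟩
    set V : Set X := ⋃₀ (𝒜 \ {A}) with hV
    have hVopen : IsOpen V := isOpen_sUnion fun B hB => hopen B hB.1
    -- V is nonempty
    obtain ⟨A₀, hA₀, B₀, hB₀, hAB₀⟩ := htwo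
    have hVne : V.Nonempty := by
      rcases eq_or_ne A₀ A with rfl | h
      · obtain ⟨x, hx⟩ := hne B₀ hB₀
        exact ⟨x, B₀, ⟨hB₀, Ne.symm hAB₀⟩, hx⟩
      · obtain ⟨x, hx⟩ := hne A₀ hA₀
        exact ⟨x, A₀, ⟨hA₀, h⟩, hx⟩
    -- V ≠ univ
    obtain ⟨q, hq⟩ := hF A hA
    have hVnuniv : V ≠ Set.univ := by
      intro h
      apply hq.2
      show q ∈ V
      rw [h]; trivial
    -- frontier V is nonempty
    have hfr : (frontier V).Nonempty := by
      by_contra h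
      rw [Set.not_nonempty_iff_eq_empty, ← isClopen_iff_frontier_eq_empty] at h
      rcases isClopen_iff.mp h with h | h
      · exact hVne.ne_empty h
      · exact hVnuniv h
    obtain ⟨p, hp⟩ := hfr
    have hpV : p ∉ V := (hVopen.frontier_eq ▸ hp).2
    -- p is in the frontier of some member
    have hpcl : p ∈ closure V := hp.1
    have hfin' : (𝒜 \ {A}).Finite := hfin.subset Set.diff_subset
    rw [hV, hfin'.closure_sUnion] at hpcl
    obtain ⟨B, hB, hpB⟩ := Set.mem_iUnion₂.mp hpcl
    have hpfB : p ∈ frontier B := ⟨hpB, fun h => hpV ⟨B, hB, interior_subset h⟩⟩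
    -- p ∈ A
    have hpA : p ∈ A := by
      have : p ∈ ⋃₀ 𝒜 := hcov ▸ Set.mem_univ p
      obtain ⟨C, hC, hpC⟩ := this
      rcases eq_or_ne C A with rfl | h
      · exact hpC
      · exact absurd ⟨C, ⟨hC, h⟩, hpC⟩ hpV
    refine ⟨p, Set.mem_iUnion₂.mpr ⟨B, hB.1, hpfB⟩, hpA, fun C hC hCA hpC => hpV ⟨C, ⟨hC, hCA⟩, hpC⟩⟩
  choose p hp1 hp2 hp3 using key
  refine Cardinal.mk_le_of_injective (f := fun A => ⟨p A, hp1 A⟩) ?_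
  intro A A' h
  by_contra hAA
  have hne' : (A' : Set X) ≠ (A : Set X) := fun h' => hAA (Subtype.ext h'.symm)
  have := hp3 A A' A'.2 hne'
  have heq : p A = p A' := congrArg Subtype.val h
  exact this (heq ▸ hp2 A')
end

section
/- Let X be a compact Hausdorff connected topological space and let 𝒜 be a finite open cover of X with at least two members that admits no proper subcover, such that every member of 𝒜 has finite frontier. Let L be the cardinality of the union of the frontiers of the members of 𝒜. Then for every n ≥ 1 and all homeomorphisms s_0, …, s_{n-1} of X, the open cover {s_0(A_0) ∩ … ∩ s_{n-1}(A_{n-1}) : A_0, …, A_{n-1} ∈ 𝒜} of X admits a subcover of cardinality at most n·L. -/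
/-!
Let `F` be the (finite) union of the frontiers of the members of `𝒜` and `Y = ⋃ᵢ sᵢ(F)`, so that
`|Y| ≤ n·L`. Pick for each `y ∈ Y` a member `B_y` of the refined cover containing `y`. The frontier
of `B_y` lies in `⋃ᵢ sᵢ(∂Aᵢ) ⊆ Y`, so the open set `U = ⋃_{y ∈ Y} B_y` contains its own frontier
and is therefore clopen. Minimality and connectedness force some member of `𝒜` to have a frontier
point, so `Y` and hence `U` are nonempty, and `U = X` by connectedness.
-/

open Set

section Frontier

variable {X ι : Type*} [TopologicalSpace X]

theorem frontier_iInter_subset_of_finite [Finite ι] (t : ι → Set X) :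
    frontier (⋂ i, t i) ⊆ ⋃ i, frontier (t i) := by
  rintro x ⟨hcl, hint⟩
  rw [interior_iInter_of_finite, mem_iInter, not_forall] at hint
  obtain ⟨i, hi⟩ := hint
  exact mem_iUnion.2 ⟨i, closure_mono (iInter_subset t i) hcl, hi⟩

theorem Set.Finite.frontier_biUnion_subset {s : Set ι} (hs : s.Finite) (t : ι → Set X) :
    frontier (⋃ i ∈ s, t i) ⊆ ⋃ i ∈ s, frontier (t i) := by
  rintro x ⟨hcl, hint⟩
  rw [hs.closure_biUnion, mem_iUnion₂] at hcl
  obtain ⟨i, hi, hx⟩ := hcl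
  exact mem_iUnion₂.2 ⟨i, hi, hx, fun h ↦ hint (interior_mono (subset_biUnion_of_mem hi) h)⟩

theorem biUnion_eq_univ_of_frontier_subset [ConnectedSpace X] {Y : Set X} (hY : Y.Finite)
    (hne : Y.Nonempty) {V : X → Set X} (hopen : ∀ y ∈ Y, IsOpen (V y))
    (hmem : ∀ y ∈ Y, y ∈ V y) (hfr : ∀ y ∈ Y, frontier (V y) ⊆ Y) :
    ⋃ y ∈ Y, V y = univ := by
  have hYU : Y ⊆ ⋃ y ∈ Y, V y := fun y hy ↦ mem_biUnion hy (hmem y hy)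
  have hclosed : IsClosed (⋃ y ∈ Y, V y) := by
    refine frontier_subset_iff_isClosed.1 ((hY.frontier_biUnion_subset V).trans ?_)
    exact iUnion₂_subset fun y hy ↦ (hfr y hy).trans hYU
  exact IsClopen.eq_univ ⟨hclosed, isOpen_biUnion hopen⟩ (hne.mono hYU)

end Frontier

theorem exists_nonempty_frontier_of_minimal_cover {X : Type*} [TopologicalSpace X]
    [ConnectedSpace X] {𝒜 : Set (Set X)} (hcov : ⋃₀ 𝒜 = univ)
    (htwo : ∃ A ∈ 𝒜, ∃ B ∈ 𝒜, A ≠ B) (hmin : ∀ 𝓑 ⊆ 𝒜, ⋃₀ 𝓑 = univ → 𝓑 = 𝒜) :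
    ∃ A ∈ 𝒜, (frontier A).Nonempty := by
  obtain ⟨x⟩ := ConnectedSpace.toNonempty (α := X)
  obtain ⟨A, hA, hxA⟩ := mem_sUnion.1 (hcov.symm ▸ mem_univ x : x ∈ ⋃₀ 𝒜)
  refine ⟨A, hA, nonempty_iff_ne_empty.2 fun hfr ↦ ?_⟩
  rcases isClopen_iff.1 (isClopen_iff_frontier_eq_empty.2 hfr) with rfl | rfl
  · exact hxA
  · have hsingle : {univ} = 𝒜 := hmin {univ} (singleton_subset_iff.2 hA) (sUnion_singleton _)
    obtain ⟨B, hB, C, hC, hBC⟩ := htwo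
    rw [← hsingle] at hB hC
    exact hBC (hB.trans hC.symm)

theorem stmt_2_general {X : Type*} [TopologicalSpace X] [ConnectedSpace X]
    (𝒜 : Set (Set X)) (hfin : 𝒜.Finite) (hopen : ∀ A ∈ 𝒜, IsOpen A)
    (hcov : ⋃₀ 𝒜 = Set.univ)
    (htwo : ∃ A ∈ 𝒜, ∃ B ∈ 𝒜, A ≠ B)
    (hmin : ∀ 𝓑 ⊆ 𝒜, ⋃₀ 𝓑 = Set.univ → 𝓑 = 𝒜)
    (hbd : ∀ A ∈ 𝒜, (frontier A).Finite)
    (L : ℕ) (hL : (⋃ A ∈ 𝒜, frontier A).ncard = L)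
    (n : ℕ) (hn : 1 ≤ n) (s : Fin n → X ≃ₜ X) :
    ∃ 𝓑 : Set (Set X),
      (∀ B ∈ 𝓑, ∃ f : Fin n → Set X, (∀ i, f i ∈ 𝒜) ∧ B = ⋂ i, (s i) '' (f i)) ∧
      ⋃₀ 𝓑 = Set.univ ∧ 𝓑.Finite ∧ 𝓑.ncard ≤ n * L := by
  set F := ⋃ A ∈ 𝒜, frontier A
  set Y := ⋃ i, s i '' F
  have hYfin : Y.Finite := finite_iUnion fun i ↦ (hfin.biUnion hbd).image _
  have hYne : Y.Nonempty := by
    obtain ⟨A, hA, x, hx⟩ := exists_nonempty_frontier_of_minimal_cover hcov htwo hmin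
    exact ⟨s ⟨0, hn⟩ x, mem_iUnion.2 ⟨⟨0, hn⟩, x, mem_biUnion hA hx, rfl⟩⟩
  choose g hg𝒜 hgmem using fun x ↦ mem_sUnion.1 (hcov.symm ▸ mem_univ x : x ∈ ⋃₀ 𝒜)
  set B : X → Set X := fun y ↦ ⋂ i, s i '' g ((s i).symm y)
  refine ⟨B '' Y, ?_, ?_, hYfin.image B, ?_⟩
  · rintro _ ⟨y, -, rfl⟩
    exact ⟨fun i ↦ g ((s i).symm y), fun i ↦ hg𝒜 _, rfl⟩
  · rw [sUnion_image]
    refine biUnion_eq_univ_of_frontier_subset hYfin hYne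
      (fun y _ ↦ isOpen_iInter_of_finite fun i ↦ (s i).isOpenMap _ (hopen _ (hg𝒜 _)))
      (fun y _ ↦ mem_iInter.2 fun i ↦ ⟨_, hgmem _, (s i).apply_symm_apply y⟩)
      (fun y _ ↦ (frontier_iInter_subset_of_finite _).trans (iUnion_mono fun i ↦ ?_))
    rw [← (s i).image_frontier]
    exact image_mono (subset_biUnion_of_mem (hg𝒜 _))
  · calc (B '' Y).ncard ≤ Y.ncard := ncard_image_le hYfin
      _ ≤ ∑ i, (s i '' F).ncard := ncard_iUnion_le_of_fintype _
      _ = n * L := by simp [ncard_image_of_injective _ (s _).injective, hL]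

/-- Let `𝒜` be a finite minimal open cover (with at least two members) of a
continuum `X`, each of whose members has finite frontier, and let `L` be the total number of
boundary points of members of `𝒜`.  Then for every `n ≥ 1` and homeomorphisms
`s₀, …, s_{n-1}` of `X`, the cover `⋁_{i<n} s_i(𝒜)` admits a subcover of cardinality `≤ n·L`. -/
theorem stmt_2 {X : Type*} [TopologicalSpace X] [CompactSpace X] [T2Space X] [ConnectedSpace X]
    (𝒜 : Set (Set X)) (hfin : 𝒜.Finite) (hopen : ∀ A ∈ 𝒜, IsOpen A)
    (hcov : ⋃₀ 𝒜 = Set.univ)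
    (htwo : ∃ A ∈ 𝒜, ∃ B ∈ 𝒜, A ≠ B)
    (hmin : ∀ 𝓑 ⊆ 𝒜, ⋃₀ 𝓑 = Set.univ → 𝓑 = 𝒜)
    (hbd : ∀ A ∈ 𝒜, (frontier A).Finite)
    (L : ℕ) (hL : (⋃ A ∈ 𝒜, frontier A).ncard = L)
    (n : ℕ) (hn : 1 ≤ n) (s : Fin n → X ≃ₜ X) :
    ∃ 𝓑 : Set (Set X),
      (∀ B ∈ 𝓑, ∃ f : Fin n → Set X, (∀ i, f i ∈ 𝒜) ∧ B = ⋂ i, (s i) '' (f i)) ∧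
      ⋃₀ 𝓑 = Set.univ ∧ 𝓑.Finite ∧ 𝓑.ncard ≤ n * L :=
  stmt_2_general 𝒜 hfin hopen hcov htwo hmin hbd L hL n hn s
end

section
/- Let D be a dendron. Then the betweenness relation on D is closed: the set {(u, w, v) ∈ D × D × D : w is between u and v} is closed in D × D × D with the product topology. -/
/-- A point `w` separates the points `u` and `v` in a topological space `X` if the complement
of `{w}` is the union of two disjoint open sets, one containing `u` and the other `v`. -/
def Separates {X : Type*} [TopologicalSpace X] (w u v : X) : Prop :=
  ∃ U V : Set X, IsOpen U ∧ IsOpen V ∧ u ∈ U ∧ v ∈ V ∧ Disjoint U V ∧ ({w}ᶜ : Set X) = U ∪ V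

/-- `w` is between `u` and `v`: `w` separates `u` and `v`, or `w ∈ {u, v}`. -/
def Between {X : Type*} [TopologicalSpace X] (u w v : X) : Prop :=
  Separates w u v ∨ w = u ∨ w = v

section Aux

variable {D : Type*} [TopologicalSpace D] [ConnectedSpace D]

/-- Auxiliary step for the connectedness of `Q ∪ {a}`. -/
lemma lemA_aux {a : D} {P Q s t : Set D} (hP : IsOpen P) (hQ : IsOpen Q)
    (hd : Disjoint P Q) (hu : ({a}ᶜ : Set D) = P ∪ Q)
    (hs : IsOpen s) (ht : IsOpen t) (hcov : Q ∪ {a} ⊆ s ∪ t)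
    (hne : (Q ∪ {a}) ∩ (s ∩ t) = ∅)
    (has : a ∈ s) (hyt : ((Q ∪ {a}) ∩ t).Nonempty) : False := by
  have hat : a ∉ t := by
    intro hat
    have : a ∈ (Q ∪ {a}) ∩ (s ∩ t) := ⟨Or.inr rfl, has, hat⟩
    rw [hne] at this
    exact this
  obtain ⟨y, hyS, hyt'⟩ := hyt
  have hyQ : y ∈ Q := by
    rcases hyS with h | h
    · exact h
    · exact absurd (h ▸ hyt') hat
  -- F := Q ∩ t is a nonempty proper clopen set, contradiction
  have hFc : (Q ∩ t)ᶜ = P ∪ s := by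
    ext x
    simp only [Set.mem_compl_iff, Set.mem_inter_iff, Set.mem_union, not_and]
    constructor
    · intro h
      by_cases hxa : x = a
      · exact Or.inr (hxa ▸ has)
      · have hx : x ∈ P ∪ Q := by
          rw [← hu]; exact hxa
        rcases hx with hx | hx
        · exact Or.inl hx
        · have : x ∈ s ∪ t := hcov (Or.inl hx)
          rcases this with h' | h'
          · exact Or.inr h'
          · exact absurd h' (h hx)
    · rintro (h | h)
      · intro hxQ
        exact absurd hxQ (Set.disjoint_left.mp hd h)
      · intro hxQ hxt
        have : x ∈ (Q ∪ {a}) ∩ (s ∩ t) := ⟨Or.inl hxQ, h, hxt⟩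
        rw [hne] at this
        exact this
  have hclopen : IsClopen (Q ∩ t) := by
    constructor
    · rw [← isOpen_compl_iff, hFc]
      exact hP.union hs
    · exact hQ.inter ht
  rcases isClopen_iff.mp hclopen with h | h
  · have : y ∈ (∅ : Set D) := h ▸ ⟨hyQ, hyt'⟩
    exact this
  · have : a ∈ Q ∩ t := h ▸ Set.mem_univ a
    exact hat this.2

/-- If `{a}ᶜ = P ∪ Q` is a disjoint open partition, then `Q ∪ {a}` is closed and connected. -/
lemma lemA {a : D} {P Q : Set D} (hP : IsOpen P) (hQ : IsOpen Q)
    (hd : Disjoint P Q) (hu : ({a}ᶜ : Set D) = P ∪ Q) :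
    IsClosed (Q ∪ {a}) ∧ IsPreconnected (Q ∪ {a}) := by
  have haPQ : a ∉ P ∪ Q := by
    rw [← hu]; simp
  have hcompl : (Q ∪ {a})ᶜ = P := by
    ext x
    simp only [Set.mem_compl_iff, Set.mem_union, Set.mem_singleton_iff, not_or]
    constructor
    · rintro ⟨hxQ, hxa⟩
      have hx : x ∈ P ∪ Q := by rw [← hu]; exact hxa
      rcases hx with hx | hx
      · exact hx
      · exact absurd hx hxQ
    · intro hxP
      refine ⟨fun hxQ => Set.disjoint_left.mp hd hxP hxQ, fun hxa => haPQ (hxa ▸ Or.inl hxP)⟩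
  constructor
  · rw [← isOpen_compl_iff, hcompl]; exact hP
  · intro s t hs ht hcov hsne htne
    by_contra hne'
    have hne : (Q ∪ {a}) ∩ (s ∩ t) = ∅ := Set.not_nonempty_iff_eq_empty.mp hne'
    have ha : a ∈ s ∪ t := hcov (Or.inr rfl)
    rcases ha with has | hat
    · exact lemA_aux hP hQ hd hu hs ht hcov hne has htne
    · refine lemA_aux hP hQ hd hu ht hs ?_ ?_ hat hsne
      · rwa [Set.union_comm t s]
      · rwa [Set.inter_comm t s]

/-- From a separating point for `w ≠ x`, extract a closed connected set containing an open
neighborhood of `x` and avoiding `w`. -/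
lemma sep_side {w x : D}
    (hsep : ∀ u v : D, u ≠ v → ∃ w, Separates w u v) (hwx : w ≠ x) :
    ∃ (c : D) (Q : Set D), IsOpen Q ∧ x ∈ Q ∧ w ∉ Q ∪ {c} ∧
      IsClosed (Q ∪ {c}) ∧ IsPreconnected (Q ∪ {c}) := by
  obtain ⟨c, P, Q, hP, hQ, hwP, hxQ, hd, hu⟩ := hsep w x hwx
  have hwc : w ∉ Q ∪ {c} := by
    rintro (h | h)
    · exact Set.disjoint_left.mp hd hwP h
    · have hwc' : w ∈ ({c}ᶜ : Set D) := by rw [hu]; exact Or.inl hwP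
      exact hwc' h
  obtain ⟨hcl, hpc⟩ := lemA hP hQ hd hu
  exact ⟨c, Q, hQ, hxQ, hwc, hcl, hpc⟩

end Aux

/-- In a dendron the betweenness relation is closed. -/
theorem stmt_3 {D : Type*} [TopologicalSpace D] [CompactSpace D] [T2Space D] [ConnectedSpace D]
    (hsep : ∀ u v : D, u ≠ v → ∃ w, Separates w u v) :
    IsClosed {p : D × D × D | Between p.1 p.2.1 p.2.2} := by
  rw [← isOpen_compl_iff]
  rw [isOpen_iff_forall_mem_open]
  rintro ⟨u, w, v⟩ hp
  simp only [Set.mem_compl_iff, Set.mem_setOf_eq, Between, not_or] at hp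
  obtain ⟨h1, h2, h3⟩ := hp
  -- h1 : ¬ Separates w u v, h2 : w ≠ u, h3 : w ≠ v
  -- Step 1: there is a closed connected set containing u and v avoiding w
  have hB : ∃ C : Set D, IsClosed C ∧ IsPreconnected C ∧ u ∈ C ∧ v ∈ C ∧ w ∉ C := by
    by_contra hno
    push_neg at hno
    apply h1
    set A := {x : D | ∃ C : Set D, IsClosed C ∧ IsPreconnected C ∧ u ∈ C ∧ x ∈ C ∧ w ∉ C}
      with hA
    have hAw : A ⊆ {w}ᶜ := by
      rintro x ⟨C, _, _, _, hxC, hwC⟩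
      simp only [Set.mem_compl_iff, Set.mem_singleton_iff]
      rintro rfl
      exact hwC hxC
    have hAopen : IsOpen A := by
      rw [isOpen_iff_forall_mem_open]
      rintro x ⟨C, hCcl, hCpc, huC, hxC, hwC⟩
      have hwx : w ≠ x := fun h => hwC (h ▸ hxC)
      obtain ⟨c, Q, hQo, hxQ, hwQ, hQcl, hQpc⟩ := sep_side hsep hwx
      refine ⟨Q, ?_, hQo, hxQ⟩
      intro y hyQ
      exact ⟨C ∪ (Q ∪ {c}), hCcl.union hQcl,
        hCpc.union x hxC (Or.inl hxQ) hQpc, Or.inl huC, Or.inr (Or.inl hyQ),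
        fun h => h.elim hwC hwQ⟩
    have hBopen : IsOpen ({w}ᶜ \ A) := by
      rw [isOpen_iff_forall_mem_open]
      rintro x ⟨hxw, hxA⟩
      simp only [Set.mem_compl_iff, Set.mem_singleton_iff] at hxw
      have hwx : w ≠ x := fun h => hxw h.symm
      obtain ⟨c, Q, hQo, hxQ, hwQ, hQcl, hQpc⟩ := sep_side hsep hwx
      refine ⟨Q, ?_, hQo, hxQ⟩
      intro y hyQ
      constructor
      · simp only [Set.mem_compl_iff, Set.mem_singleton_iff]
        rintro rfl
        exact hwQ (Or.inl hyQ)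
      · rintro ⟨C, hCcl, hCpc, huC, hyC, hwC⟩
        exact hxA ⟨C ∪ (Q ∪ {c}), hCcl.union hQcl,
          hCpc.union y hyC (Or.inl hyQ) hQpc, Or.inl huC, Or.inr (Or.inl hxQ),
          fun h => h.elim hwC hwQ⟩
    refine ⟨A, {w}ᶜ \ A, hAopen, hBopen, ?_, ?_, ?_, ?_⟩
    · exact ⟨{u}, isClosed_singleton, isPreconnected_singleton, rfl, rfl, by simpa using h2⟩
    · refine ⟨fun h => h3 ((Set.mem_singleton_iff.mp h).symm), ?_⟩
      rintro ⟨C, hCcl, hCpc, huC, hvC, hwC⟩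
      exact hwC (hno C hCcl hCpc huC hvC)
    · exact Set.disjoint_sdiff_right
    · exact (Set.union_diff_cancel hAw).symm
  obtain ⟨C₀, hC₀cl, hC₀pc, huC₀, hvC₀, hwC₀⟩ := hB
  obtain ⟨a, Q, hQo, huQ, hwQ, hQcl, hQpc⟩ := sep_side hsep h2
  obtain ⟨b, S, hSo, hvS, hwS, hScl, hSpc⟩ := sep_side hsep h3
  set C : Set D := (C₀ ∪ (Q ∪ {a})) ∪ (S ∪ {b}) with hC
  have hCcl : IsClosed C := (hC₀cl.union hQcl).union hScl
  have hCpc : IsPreconnected C :=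
    (hC₀pc.union u huC₀ (Or.inl huQ) hQpc).union v (Or.inl hvC₀) (Or.inl hvS) hSpc
  have hwC : w ∉ C := by
    rintro ((h | h) | h)
    · exact hwC₀ h
    · exact hwQ h
    · exact hwS h
  have hQC : Q ⊆ C := fun y hy => Or.inl (Or.inr (Or.inl hy))
  have hSC : S ⊆ C := fun y hy => Or.inr (Or.inl hy)
  refine ⟨Q ×ˢ (Cᶜ ×ˢ S), ?_, (hQo.prod ((hCcl.isOpen_compl).prod hSo)), ⟨huQ, hwC, hvS⟩⟩
  rintro ⟨u', w', v'⟩ ⟨hu', hw', hv'⟩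
  simp only [Set.mem_compl_iff, Set.mem_setOf_eq]
  intro hb
  have hw'C : w' ∉ C := hw'
  rcases hb with hsepb | rfl | rfl
  · obtain ⟨U', V', hU', hV', hu'U, hv'V, hd', huniv'⟩ := hsepb
    have hCsub : C ⊆ U' ∪ V' := by
      rw [← huniv']
      intro z hz
      simp only [Set.mem_compl_iff, Set.mem_singleton_iff]
      rintro rfl
      exact hw'C hz
    obtain ⟨z, _, hzU, hzV⟩ := hCpc U' V' hU' hV' hCsub
      ⟨u', hQC hu', hu'U⟩ ⟨v', hSC hv', hv'V⟩
    exact Set.disjoint_left.mp hd' hzU hzV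
  · exact hw'C (hQC hu')
  · exact hw'C (hSC hv')
end

section
/- Let X and Y be dendrons and let f : X → Y be any (not necessarily continuous) function. Then f is interval preserving (i.e. whenever w is between u and v in X, f(w) is between f(u) and f(v) in Y) if and only if the preimage under f of every connected subset of Y is connected. -/
open Set

section

variable {X : Type*} [TopologicalSpace X]

theorem IsPreconnected.sInter_of_directedOn [CompactSpace X] [T2Space X] {S : Set (Set X)}
    (hne : S.Nonempty) (hdir : DirectedOn (· ⊇ ·) S) (hcl : ∀ K ∈ S, IsClosed K)
    (hS : ∀ K ∈ S, IsPreconnected K) : IsPreconnected (⋂₀ S) := by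
  rw [isPreconnected_iff_subset_of_fully_disjoint_closed (isClosed_sInter hcl)]
  intro F₁ F₂ hF₁ hF₂ hcov hdisj
  obtain ⟨O₁, O₂, hO₁, hO₂, hFO₁, hFO₂, hO⟩ := normal_separation hF₁ hF₂ hdisj
  have : Nonempty S := hne.to_subtype
  obtain ⟨⟨K, hKS⟩, hK⟩ := ((hO₁.union hO₂).isClosed_compl.isCompact).elim_directed_family_closed
    (fun K : S => (K : Set X)) (fun K => hcl K K.2)
    (by
      rw [← sInter_eq_iInter, ← disjoint_iff_inter_eq_empty, disjoint_compl_left_iff_subset]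
      exact hcov.trans (union_subset_union hFO₁ hFO₂))
    hdir.directed_val
  rw [← disjoint_iff_inter_eq_empty, disjoint_compl_left_iff_subset] at hK
  have hsub : ⋂₀ S ⊆ K := sInter_subset_of_mem hKS
  rcases (hS K hKS).subset_or_subset hO₁ hO₂ hO hK with hK₁ | hK₂
  · exact Or.inl fun x hx => (hcov hx).resolve_right
      fun hx₂ => disjoint_left.mp hO (hK₁ (hsub hx)) (hFO₂ hx₂)
  · exact Or.inr fun x hx => (hcov hx).resolve_left
      fun hx₁ => disjoint_left.mp hO (hFO₁ hx₁) (hK₂ (hsub hx))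

theorem exists_minimal_isClosed_isPreconnected_superset [CompactSpace X] [T2Space X]
    [ConnectedSpace X] (A : Set X) :
    ∃ M, Minimal (fun K => IsClosed K ∧ IsPreconnected K ∧ A ⊆ K) M := by
  obtain ⟨M, -, hM⟩ := zorn_superset_nonempty {K : Set X | IsClosed K ∧ IsPreconnected K ∧ A ⊆ K}
    (fun c hcS hc hne => ⟨⋂₀ c, ⟨isClosed_sInter fun K hK => (hcS hK).1,
      IsPreconnected.sInter_of_directedOn hne
        (fun K hK L hL => (hc.total hK hL).elim (fun h => ⟨K, hK, subset_rfl, h⟩)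
          fun h => ⟨L, hL, h, subset_rfl⟩)
        (fun K hK => (hcS hK).1) (fun K hK => (hcS hK).2.1),
      subset_sInter fun K hK => (hcS hK).2.2⟩, fun _ => sInter_subset_of_mem⟩)
    univ ⟨isClosed_univ, isPreconnected_univ, subset_univ A⟩
  exact ⟨M, hM⟩

theorem IsPreconnected.of_union_of_isClosed {P Q : Set X} (h : IsPreconnected (P ∪ Q))
    (hP : IsClosed P) (hQ : IsClosed Q) (hPQ : IsPreconnected (P ∩ Q)) : IsPreconnected P := by
  rw [isPreconnected_iff_subset_of_fully_disjoint_closed hP]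
  intro F₁ F₂ hF₁ hF₂ hcov hdisj
  have hPQcov : P ∩ Q ⊆ F₁ ∪ F₂ := inter_subset_left.trans hcov
  wlog hPQ₁ : P ∩ Q ⊆ F₁ generalizing F₁ F₂
  · have hPQ₂ : P ∩ Q ⊆ F₂ := by
      rcases (isPreconnected_iff_subset_of_disjoint_closed.mp hPQ) F₁ F₂ hF₁ hF₂ hPQcov
        (by rw [hdisj.inter_eq, inter_empty]) with h₁ | h₂
      exacts [absurd h₁ hPQ₁, h₂]
    exact (this F₂ F₁ hF₂ hF₁ (union_comm F₁ F₂ ▸ hcov) hdisj.symm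
      (union_comm F₁ F₂ ▸ hPQcov) hPQ₂).symm
  have hcov' : P ∪ Q ⊆ (F₁ ∪ Q) ∪ (F₂ ∩ P) := by
    rintro x (hx | hx)
    · exact (hcov hx).elim (fun h₁ => Or.inl (Or.inl h₁)) fun h₂ => Or.inr ⟨h₂, hx⟩
    · exact Or.inl (Or.inr hx)
  have hdisj' : (P ∪ Q) ∩ ((F₁ ∪ Q) ∩ (F₂ ∩ P)) = ∅ := by
    ext x
    simp only [mem_inter_iff, mem_union, mem_empty_iff_false, iff_false]
    rintro ⟨-, hx₁ | hxQ, hx₂, hxP⟩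
    · exact disjoint_left.mp hdisj hx₁ hx₂
    · exact disjoint_left.mp hdisj (hPQ₁ ⟨hxP, hxQ⟩) hx₂
  rcases (isPreconnected_iff_subset_of_disjoint_closed.mp h) (F₁ ∪ Q) (F₂ ∩ P)
      (hF₁.union hQ) (hF₂.inter hP) hcov' hdisj' with h₁ | h₂
  · exact Or.inl fun x hx => (h₁ (Or.inl hx)).elim id fun hxQ => hPQ₁ ⟨hx, hxQ⟩
  · exact Or.inr fun x hx => (h₂ (Or.inl hx)).1

structure PointCut (X : Type*) [TopologicalSpace X] where
  point : X
  left : Set X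
  right : Set X
  isOpen_left : IsOpen left
  isOpen_right : IsOpen right
  disjoint : Disjoint left right
  compl_singleton_eq : ({point}ᶜ : Set X) = left ∪ right

namespace PointCut

variable (c : PointCut X)

@[simps]
def symm : PointCut X :=
  ⟨c.point, c.right, c.left, c.isOpen_right, c.isOpen_left, c.disjoint.symm,
    by rw [c.compl_singleton_eq, union_comm]⟩

theorem mem_left_or_mem_right {x : X} (hx : x ≠ c.point) : x ∈ c.left ∨ x ∈ c.right := by
  have hx' : x ∈ ({c.point}ᶜ : Set X) := hx
  rwa [c.compl_singleton_eq] at hx'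

theorem point_notMem_left : c.point ∉ c.left := fun h =>
  (c.compl_singleton_eq ▸ Or.inl h : c.point ∈ ({c.point}ᶜ : Set X)) rfl

theorem point_notMem_right : c.point ∉ c.right :=
  c.symm.point_notMem_left

theorem ne_point_of_mem_left {x : X} (hx : x ∈ c.left) : x ≠ c.point :=
  ne_of_mem_of_not_mem hx c.point_notMem_left

theorem left_union_singleton_eq : c.left ∪ {c.point} = c.rightᶜ := by
  ext x
  by_cases hx : x = c.point
  · subst hx
    simp [c.point_notMem_right]
  · have := c.mem_left_or_mem_right hx
    have : x ∈ c.left → x ∉ c.right := fun h => disjoint_left.mp c.disjoint h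
    simp only [mem_union, mem_singleton_iff, hx, or_false, mem_compl_iff]
    tauto

theorem isClosed_left_union_singleton : IsClosed (c.left ∪ {c.point}) := by
  rw [left_union_singleton_eq]
  exact c.isOpen_right.isClosed_compl

theorem separates {u v : X} (hu : u ∈ c.left) (hv : v ∈ c.right) : Separates c.point u v :=
  ⟨c.left, c.right, c.isOpen_left, c.isOpen_right, hu, hv, c.disjoint, c.compl_singleton_eq⟩

theorem isPreconnected_left_union_singleton [ConnectedSpace X] :
    IsPreconnected (c.left ∪ {c.point}) := by
  -- a relatively clopen piece of `c.left ∪ {c.point}` missing `c.point` is clopen in `X`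
  have key : ∀ F₁ F₂ : Set X, IsClosed F₁ → IsClosed F₂ → c.left ∪ {c.point} ⊆ F₁ ∪ F₂ →
      Disjoint F₁ F₂ → c.point ∈ F₁ → c.left ∪ {c.point} ⊆ F₁ := by
    intro F₁ F₂ hF₁ hF₂ hcov hdisj hp
    have hT : c.left ∩ F₂ = (c.left ∪ {c.point}) ∩ F₂ := by
      rw [union_inter_distrib_right, singleton_inter_eq_empty.mpr
        (disjoint_left.mp hdisj hp), union_empty]
    have hT' : c.left ∩ F₂ = c.left \ F₁ := by
      ext x
      refine ⟨fun hx => ⟨hx.1, disjoint_right.mp hdisj hx.2⟩, fun hx => ⟨hx.1, ?_⟩⟩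
      exact (hcov (Or.inl hx.1)).resolve_left hx.2
    have hclopen : IsClopen (c.left ∩ F₂) :=
      ⟨hT ▸ c.isClosed_left_union_singleton.inter hF₂, hT' ▸ c.isOpen_left.sdiff hF₁⟩
    have hempty : c.left ∩ F₂ = ∅ := (isClopen_iff.mp hclopen).resolve_right fun h =>
      c.point_notMem_left (h ▸ mem_univ c.point : c.point ∈ c.left ∩ F₂).1
    rintro x (hx | rfl)
    · exact (hcov (Or.inl hx)).resolve_right fun hx₂ => hempty.subset ⟨hx, hx₂⟩
    · exact hp
  rw [isPreconnected_iff_subset_of_fully_disjoint_closed c.isClosed_left_union_singleton]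
  intro F₁ F₂ hF₁ hF₂ hcov hdisj
  rcases hcov (Or.inr rfl) with hp | hp
  · exact Or.inl (key F₁ F₂ hF₁ hF₂ hcov hdisj hp)
  · exact Or.inr (key F₂ F₁ hF₂ hF₁ (union_comm F₁ F₂ ▸ hcov) hdisj.symm hp)

theorem subset_left_of_isPreconnected {S : Set X} (hS : IsPreconnected S) (hp : c.point ∉ S)
    {x : X} (hxS : x ∈ S) (hx : x ∈ c.left) : S ⊆ c.left :=
  hS.subset_left_of_subset_union c.isOpen_left c.isOpen_right c.disjoint
    (fun _ hy => c.mem_left_or_mem_right (ne_of_mem_of_not_mem hy hp)) ⟨x, hxS, hx⟩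

theorem isPreconnected_inter_left_union_singleton (c : PointCut X) {C : Set X}
    (hC : IsPreconnected C) (hCcl : IsClosed C) : IsPreconnected (C ∩ (c.left ∪ {c.point})) := by
  have hunion : C ∩ (c.left ∪ {c.point}) ∪ C ∩ (c.right ∪ {c.point}) = C := by
    rw [← inter_union_distrib_left, c.left_union_singleton_eq, ← union_assoc, compl_union_self,
      univ_union, inter_univ]
  have hinter : C ∩ (c.left ∪ {c.point}) ∩ (C ∩ (c.right ∪ {c.point})) ⊆ {c.point} := by
    rintro x ⟨⟨-, hxl⟩, -, hxr⟩
    rw [c.left_union_singleton_eq] at hxl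
    rw [← c.symm_left, ← c.symm_point, c.symm.left_union_singleton_eq] at hxr
    by_contra hx
    exact (c.mem_left_or_mem_right hx).elim hxr hxl
  exact (hunion ▸ hC).of_union_of_isClosed (hCcl.inter c.isClosed_left_union_singleton)
    (hCcl.inter c.symm.isClosed_left_union_singleton)
    (subsingleton_singleton.anti hinter).isPreconnected

theorem right_subset_of_point_mem_right [ConnectedSpace X] {c d : PointCut X} {z : X}
    (hc : z ∈ c.left) (hd : z ∈ d.left) (h : c.point ∈ d.right) : c.right ⊆ d.right := by
  have hsub : d.left ∪ {d.point} ⊆ c.left :=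
    c.subset_left_of_isPreconnected d.isPreconnected_left_union_singleton
      (by rw [d.left_union_singleton_eq]; exact fun h' => h' h) (Or.inl hd) hc
  rw [d.left_union_singleton_eq] at hsub
  exact fun x hx => by_contra fun hx' => disjoint_left.mp c.disjoint (hsub hx') hx

theorem exists_right_superset [ConnectedSpace X] {z u : X} {c d : PointCut X}
    (hc : z ∈ c.left ∧ u ∈ c.right) (hd : z ∈ d.left ∧ u ∈ d.right) :
    ∃ e : PointCut X, (z ∈ e.left ∧ u ∈ e.right) ∧ c.right ⊆ e.right ∧ d.right ⊆ e.right := by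
  by_cases hp : c.point = d.point
  · refine ⟨⟨c.point, c.left ∩ d.left, c.right ∪ d.right, c.isOpen_left.inter d.isOpen_left,
      c.isOpen_right.union d.isOpen_right, ?_, ?_⟩, ⟨⟨hc.1, hd.1⟩, Or.inl hc.2⟩,
      subset_union_left, subset_union_right⟩
    · exact Disjoint.union_right (c.disjoint.mono_left inter_subset_left)
        (d.disjoint.mono_left inter_subset_right)
    · rw [hp, d.compl_singleton_eq]
      ext x
      have hc' : x ∈ c.left ∪ c.right ↔ x ∈ d.left ∪ d.right := by
        rw [← c.compl_singleton_eq, ← d.compl_singleton_eq, hp]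
      have hcd : x ∈ c.left → x ∉ c.right := fun h => disjoint_left.mp c.disjoint h
      have hdd : x ∈ d.left → x ∉ d.right := fun h => disjoint_left.mp d.disjoint h
      simp only [mem_union, mem_inter_iff] at hc' ⊢
      tauto
  rcases d.mem_left_or_mem_right hp with hcd | hcd
  · rcases c.mem_left_or_mem_right (Ne.symm hp) with hdc | hdc
    · have hleft : c.left ⊆ d.left := right_subset_of_point_mem_right (c := c.symm) (d := d.symm)
        hc.2 hd.2 hcd
      exact (d.point_notMem_left (hleft hdc)).elim
    · exact ⟨c, hc, subset_rfl, right_subset_of_point_mem_right hd.1 hc.1 hdc⟩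
  · exact ⟨d, hd, right_subset_of_point_mem_right hc.1 hd.1 hcd, subset_rfl⟩

end PointCut

def SeparatedByPoints (X : Type*) [TopologicalSpace X] : Prop :=
  ∀ u v : X, u ≠ v → ∃ w, Separates w u v

theorem separates_iff {w u v : X} :
    Separates w u v ↔ ∃ c : PointCut X, c.point = w ∧ u ∈ c.left ∧ v ∈ c.right := by
  constructor
  · rintro ⟨U, V, hU, hV, hu, hv, hd, hc⟩
    exact ⟨⟨w, U, V, hU, hV, hd, hc⟩, rfl, hu, hv⟩
  · rintro ⟨c, rfl, hu, hv⟩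
    exact c.separates hu hv

theorem IsPreconnected.mem_of_separates {S : Set X} (hS : IsPreconnected S) {w u v : X}
    (h : Separates w u v) (hu : u ∈ S) (hv : v ∈ S) : w ∈ S := by
  obtain ⟨c, rfl, huc, hvc⟩ := separates_iff.mp h
  by_contra hw
  exact disjoint_left.mp c.disjoint (c.subset_left_of_isPreconnected hS hw hu huc hv) hvc

def interval (u v : X) : Set X := {w | Between u w v}

theorem left_mem_interval (u v : X) : u ∈ interval u v := Or.inr (Or.inl rfl)

theorem right_mem_interval (u v : X) : v ∈ interval u v := Or.inr (Or.inr rfl)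

theorem IsPreconnected.interval_subset {S : Set X} (hS : IsPreconnected S) {u v : X}
    (hu : u ∈ S) (hv : v ∈ S) : interval u v ⊆ S := by
  rintro w (h | rfl | rfl)
  exacts [hS.mem_of_separates h hu hv, hu, hv]

/-- `shadow u z` consists of the points that no cut between `z` and `u` puts on the side of `u`;
in a dendron these are the `t` with `z` between `u` and `t` (see `separates_of_mem_shadow`). -/
def shadow (u z : X) : Set X :=
  {t | ∀ c : PointCut X, z ∈ c.left → u ∈ c.right → t ∉ c.right}

theorem self_mem_shadow (u z : X) : z ∈ shadow u z :=
  fun c hz _ => disjoint_left.mp c.disjoint hz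

theorem shadow_eq_sInter (u z : X) :
    shadow u z = ⋂₀ ((fun c : PointCut X => c.rightᶜ) '' {c | z ∈ c.left ∧ u ∈ c.right}) := by
  ext t
  simp [shadow]

theorem isClosed_shadow (u z : X) : IsClosed (shadow u z) := by
  rw [shadow_eq_sInter]
  exact isClosed_sInter (forall_mem_image.2 fun c _ => c.isOpen_right.isClosed_compl)

theorem isPreconnected_shadow [CompactSpace X] [T2Space X] [ConnectedSpace X] (u z : X) :
    IsPreconnected (shadow u z) := by
  rw [shadow_eq_sInter]
  rcases eq_empty_or_nonempty {c : PointCut X | z ∈ c.left ∧ u ∈ c.right} with h | h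
  · rw [h, image_empty, sInter_empty]
    exact isPreconnected_univ
  refine IsPreconnected.sInter_of_directedOn (h.image _) ?_
    (forall_mem_image.2 fun c _ => c.isOpen_right.isClosed_compl)
    (forall_mem_image.2 fun c _ =>
      c.left_union_singleton_eq ▸ c.isPreconnected_left_union_singleton)
  refine directedOn_image.2 fun c hc d hd => ?_
  obtain ⟨e, he, hce, hde⟩ := PointCut.exists_right_superset hc hd
  exact ⟨e, he, compl_subset_compl.2 hce, compl_subset_compl.2 hde⟩

theorem notMem_shadow (hsep : SeparatedByPoints X) {u z : X} (hzu : z ≠ u) :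
    u ∉ shadow u z := by
  obtain ⟨w, hw⟩ := hsep z u hzu
  obtain ⟨c, -, hzc, huc⟩ := separates_iff.mp hw
  exact fun h => h c hzc huc huc

section Dendron

variable [ConnectedSpace X]

theorem PointCut.point_notMem_shadow (hsep : SeparatedByPoints X)
    {u z : X} (c : PointCut X) (hz : z ∈ c.left) (hu : u ∈ c.right) : c.point ∉ shadow u z := by
  obtain ⟨w, hw⟩ := hsep c.point z (c.ne_point_of_mem_left hz).symm
  obtain ⟨d, rfl, hcd, hzd⟩ := separates_iff.mp hw
  have hdc : d.point ∈ c.left :=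
    (c.isPreconnected_left_union_singleton.mem_of_separates hw (Or.inr rfl)
      (Or.inl hz)).resolve_right (d.ne_point_of_mem_left hcd).symm
  have hud : u ∈ d.left :=
    d.subset_left_of_isPreconnected c.symm.isPreconnected_left_union_singleton
      (fun h => h.elim (disjoint_left.mp c.disjoint hdc) (d.ne_point_of_mem_left hcd).symm)
      (Or.inr rfl) hcd (Or.inl hu)
  exact fun h => h d.symm hzd hud hcd

theorem compl_shadow_subset_right (hsep : SeparatedByPoints X) {u z : X}
    {d : PointCut X} (hd : d.point ∈ shadow u z) (hu : u ∈ d.right) : (shadow u z)ᶜ ⊆ d.right := by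
  intro t ht
  obtain ⟨c, hz, huc, htc⟩ : ∃ c : PointCut X, z ∈ c.left ∧ u ∈ c.right ∧ t ∈ c.right := by
    simpa [shadow] using ht
  have hdc : d.point ∉ c.right ∪ {c.point} := fun h => h.elim (hd c hz huc)
    fun h' => c.point_notMem_shadow hsep hz huc (mem_singleton_iff.mp h' ▸ hd)
  exact d.symm.subset_left_of_isPreconnected c.symm.isPreconnected_left_union_singleton hdc
    (Or.inl huc) hu (Or.inl htc)

variable [CompactSpace X] [T2Space X]

theorem isOpen_shadow_diff_singleton (hsep : SeparatedByPoints X) {u z : X}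
    (hzu : z ≠ u) : IsOpen (shadow u z \ {z}) := by
  rw [isOpen_iff_forall_mem_open]
  rintro t ⟨ht, htz⟩
  obtain ⟨w, hw⟩ := hsep t z htz
  obtain ⟨d, rfl, htd, hzd⟩ := separates_iff.mp hw
  have hd : d.point ∈ shadow u z :=
    (isPreconnected_shadow u z).mem_of_separates hw ht (self_mem_shadow u z)
  have hud : u ∈ d.right :=
    (d.mem_left_or_mem_right (ne_of_mem_of_not_mem hd (notMem_shadow hsep hzu)).symm).resolve_left
      fun hud => d.symm.point_notMem_shadow hsep hzd hud hd
  have hsub := compl_shadow_subset_right hsep hd hud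
  refine ⟨d.left, fun x hx => ⟨by_contra fun h => disjoint_left.mp d.disjoint hx (hsub h),
    fun hxz => disjoint_left.mp d.disjoint ((mem_singleton_iff.mp hxz) ▸ hx) hzd⟩,
    d.isOpen_left, htd⟩

theorem separates_of_mem_shadow (hsep : SeparatedByPoints X) {u v z : X}
    (hzu : z ≠ u) (hv : v ∈ shadow u z) (hvz : v ≠ z) : Separates z u v := by
  have hcompl : ({z}ᶜ : Set X) = (shadow u z)ᶜ ∪ (shadow u z \ {z}) := by
    ext x
    by_cases hx : x = z
    · simp [hx, self_mem_shadow]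
    · by_cases hxs : x ∈ shadow u z <;> simp [hx, hxs]
  exact PointCut.separates ⟨z, (shadow u z)ᶜ, shadow u z \ {z}, (isClosed_shadow u z).isOpen_compl,
    isOpen_shadow_diff_singleton hsep hzu, disjoint_compl_left.mono_right sdiff_subset, hcompl⟩
    (notMem_shadow hsep hzu) ⟨hv, hvz⟩

theorem exists_pointCut_of_notMem_interval (hsep : SeparatedByPoints X)
    {u v z : X} (hz : z ∉ interval u v) :
    ∃ c : PointCut X, z ∈ c.left ∧ u ∈ c.right ∧ v ∈ c.right := by
  by_contra! h
  have hzu : z ≠ u := fun h => hz (h ▸ left_mem_interval u v)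
  have hvz : v ≠ z := fun h => hz (h ▸ right_mem_interval u v)
  exact hz (Or.inl (separates_of_mem_shadow hsep hzu h hvz))

theorem isPreconnected_interval (hsep : SeparatedByPoints X) (u v : X) :
    IsPreconnected (interval u v) := by
  obtain ⟨M, hM⟩ := exists_minimal_isClosed_isPreconnected_superset ({u, v} : Set X)
  obtain ⟨hMcl, hMpre, huvM⟩ := hM.prop
  obtain ⟨huM, hvM⟩ := pair_subset_iff.mp huvM
  suffices interval u v = M from this ▸ hMpre
  refine (hMpre.interval_subset huM hvM).antisymm fun z hzM => by_contra fun hz => ?_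
  obtain ⟨c, hzc, huc, hvc⟩ := exists_pointCut_of_notMem_interval hsep hz
  have hcut : IsClosed (M ∩ (c.right ∪ {c.point})) ∧ IsPreconnected (M ∩ (c.right ∪ {c.point})) ∧
      {u, v} ⊆ M ∩ (c.right ∪ {c.point}) :=
    ⟨hMcl.inter c.symm.isClosed_left_union_singleton,
      c.symm.isPreconnected_inter_left_union_singleton hMpre hMcl,
      pair_subset_iff.mpr ⟨⟨huM, Or.inl huc⟩, ⟨hvM, Or.inl hvc⟩⟩⟩
  have hzcut : z ∈ c.right ∪ {c.point} := (hM.eq_of_subset hcut inter_subset_left ▸ hzM).2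
  exact hzcut.elim (disjoint_left.mp c.disjoint hzc) (c.ne_point_of_mem_left hzc)

end Dendron

end

/-- For dendrons `X`, `Y` and any (not necessarily continuous) map
`f : X → Y`:  `f` is interval preserving (B-monotone) iff the preimage of every connected
subset of `Y` is connected (C-monotone). -/
theorem stmt_5 {X Y : Type*}
    [TopologicalSpace X] [CompactSpace X] [T2Space X] [ConnectedSpace X]
    [TopologicalSpace Y] [CompactSpace Y] [T2Space Y] [ConnectedSpace Y]
    (hsepX : ∀ u v : X, u ≠ v → ∃ w, Separates w u v)
    (hsepY : ∀ u v : Y, u ≠ v → ∃ w, Separates w u v)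
    (f : X → Y) :
    (∀ u w v : X, Between u w v → Between (f u) (f w) (f v)) ↔
      (∀ C : Set Y, IsPreconnected C → IsPreconnected (f ⁻¹' C)) := by
  refine ⟨fun hf C hC => ?_, fun hf u w v h => ?_⟩
  · rcases (f ⁻¹' C).eq_empty_or_nonempty with he | ⟨a, ha⟩
    · exact he ▸ isPreconnected_empty
    exact isPreconnected_of_forall a fun b hb => ⟨interval a b,
      fun w hw => hC.interval_subset ha hb (hf a w b hw), left_mem_interval a b,
      right_mem_interval a b, isPreconnected_interval hsepX a b⟩
  · exact (hf _ (isPreconnected_interval hsepY (f u) (f v))).interval_subset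
      (left_mem_interval (f u) (f v)) (right_mem_interval (f u) (f v)) h
end

section
/- Let (X, τ) be a compact Hausdorff topological space and let R be a ternary relation on X (write ⟨u,w,v⟩ for (u,w,v) ∈ R and [u,v] = {x : ⟨u,x,v⟩} ∪ {u,v}) which is weakly τ-stable: for every infinite subset K ⊆ X there exist distinct points u, v ∈ K, a point w ∈ [u,v] \ {u,v}, and open neighborhoods U of u and V of v such that w ∈ [x,y] for every x ∈ U ∩ K and y ∈ V ∩ K. Then every R-monotone function f : X → ℝ (i.e. ⟨u,w,v⟩ implies min(f(u), f(v)) ≤ f(w) ≤ max(f(u), f(v))) is fragmented: for every nonempty closed subset Y ⊆ X the restriction f|_Y has at least one point of continuity. -/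
/-!
If `f|Y` had no point of continuity, every point of `Y` would lie in
`closure {f ≤ p} ∩ closure {f ≥ q}` (taken inside `Y`) for some rationals `p < q`. By Baire's
theorem one of these countably many closed sets contains a nonempty relatively open piece of `Y`,
on which the two level sets `A = {f ≤ p}` and `B = {f ≥ q}` are dense in each other. Then `A ∪ B`
is infinite, and weak stability yields `w` and neighbourhoods `U`, `V` such that `w` lies between
points of `A` taken in `U` and `V`, and also between points of `B` taken in `U` and `V`. Monotonicity
forces `f w ≤ p` and `f w ≥ q`.
-/

open Set

section

variable {X : Type*} [TopologicalSpace X]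

def WeaklyStable (R : X → X → X → Prop) : Prop :=
  ∀ K : Set X, K.Infinite → ∃ u ∈ K, ∃ v ∈ K, u ≠ v ∧
    ∃ w : X, R u w v ∧ w ≠ u ∧ w ≠ v ∧
      ∃ U V : Set X, IsOpen U ∧ u ∈ U ∧ IsOpen V ∧ v ∈ V ∧
        ∀ x ∈ U ∩ K, ∀ y ∈ V ∩ K, (R x w y ∨ w = x ∨ w = y)

def RMonotone (R : X → X → X → Prop) (f : X → ℝ) : Prop :=
  ∀ u w v : X, R u w v → min (f u) (f v) ≤ f w ∧ f w ≤ max (f u) (f v)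

theorem exists_rat_mem_closure_of_not_continuousWithinAt {f : X → ℝ} {Y : Set X} {y : X}
    (hy : y ∈ Y) (hf : ¬ContinuousWithinAt f Y y) :
    ∃ p q : ℚ, p < q ∧ y ∈ closure {x ∈ Y | f x ≤ p} ∩ closure {x ∈ Y | q ≤ f x} := by
  rw [ContinuousWithinAt, tendsto_order, not_and_or] at hf
  push Not at hf
  rcases hf with ⟨a, ha, hfreq⟩ | ⟨b, hb, hfreq⟩
  · obtain ⟨p, hap, hpy⟩ := exists_rat_btwn ha
    obtain ⟨q, hpq, hqy⟩ := exists_rat_btwn hpy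
    refine ⟨p, q, mod_cast hpq, ?_, subset_closure ⟨hy, hqy.le⟩⟩
    rw [mem_closure_iff_frequently]
    exact (frequently_nhdsWithin_iff.1 hfreq).mono fun x hx => ⟨hx.2, hx.1.trans hap.le⟩
  · obtain ⟨q, hyq, hqb⟩ := exists_rat_btwn hb
    obtain ⟨p, hyp, hpq⟩ := exists_rat_btwn hyq
    refine ⟨p, q, mod_cast hpq, subset_closure ⟨hy, hyp.le⟩, ?_⟩
    rw [mem_closure_iff_frequently]
    exact (frequently_nhdsWithin_iff.1 hfreq).mono fun x hx => ⟨hx.2, hqb.le.trans hx.1⟩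

theorem exists_isOpen_inter_subset_of_subset_iUnion {Y : Set X} [BaireSpace Y]
    (hY : Y.Nonempty) {ι : Type*} [Countable ι] {C : ι → Set X} (hC : ∀ i, IsClosed (C i))
    (hcover : Y ⊆ ⋃ i, C i) : ∃ i, ∃ U, IsOpen U ∧ (U ∩ Y).Nonempty ∧ U ∩ Y ⊆ C i := by
  have : Nonempty Y := hY.to_subtype
  have hunion : ⋃ i, ((↑) ⁻¹' C i : Set Y) = univ := by
    simpa [← preimage_iUnion, eq_univ_iff_forall] using fun y hy => hcover hy
  obtain ⟨i, y, hy⟩ :=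
    nonempty_interior_of_iUnion_of_closed (fun i => (hC i).preimage continuous_subtype_val) hunion
  obtain ⟨U, hU, hUY⟩ := isOpen_induced_iff.1 (isOpen_interior (s := ((↑) ⁻¹' C i : Set Y)))
  have hyU : (y : X) ∈ U := by rw [← mem_preimage, hUY]; exact hy
  refine ⟨i, U, hU, ⟨y, hyU, y.2⟩, fun x ⟨hxU, hxY⟩ => ?_⟩
  have hx : (⟨x, hxY⟩ : Y) ∈ interior ((↑) ⁻¹' C i) := by rw [← hUY]; exact hxU
  exact interior_subset (s := ((↑) ⁻¹' C i : Set Y)) hx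

theorem infinite_of_subset_closure_of_disjoint [T1Space X] {A B : Set X} (hA : A.Nonempty)
    (hAB : A ⊆ closure B) (hdisj : Disjoint A B) : B.Infinite := fun hB => by
  obtain ⟨a, ha⟩ := hA
  exact hdisj.ne_of_mem ha (hB.isClosed.closure_eq ▸ hAB ha) rfl

theorem exists_mem_ne_of_mem_closure [T1Space X] {A O : Set X} {x : X} (hx : x ∈ closure A)
    (hO : IsOpen O) (hxO : x ∈ O) {w : X} (hxw : x ≠ w) : ∃ a ∈ A, a ∈ O ∧ a ≠ w := by
  obtain ⟨a, ⟨haO, haw⟩, haA⟩ :=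
    mem_closure_iff.1 hx (O ∩ {w}ᶜ) (hO.inter isOpen_compl_singleton) ⟨hxO, hxw⟩
  exact ⟨a, haA, haO, haw⟩

theorem WeaklyStable.false_of_subset_closure [T1Space X] {R : X → X → X → Prop}
    (hR : WeaklyStable R) {f : X → ℝ} (hf : RMonotone R f) {A B : Set X} (hA : A.Nonempty)
    (hAB : A ⊆ closure B) (hBA : B ⊆ closure A) (hlt : ∀ a ∈ A, ∀ b ∈ B, f a < f b) : False := by
  have hdisj : Disjoint A B :=
    disjoint_left.2 fun a haA haB => (hlt a haA a haB).false
  have hinf : (A ∪ B).Infinite :=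
    (infinite_of_subset_closure_of_disjoint hA hAB hdisj).mono subset_union_right
  obtain ⟨u, hu, v, hv, -, w, -, hwu, hwv, U, V, hU, huU, hV, hvV, hUV⟩ := hR (A ∪ B) hinf
  have hclA : A ∪ B ⊆ closure A := union_subset subset_closure hBA
  have hclB : A ∪ B ⊆ closure B := union_subset hAB subset_closure
  have between : ∀ x ∈ U ∩ (A ∪ B), ∀ y ∈ V ∩ (A ∪ B), x ≠ w → y ≠ w →
      min (f x) (f y) ≤ f w ∧ f w ≤ max (f x) (f y) := fun x hx y hy hxw hyw =>
    hf x w y (((hUV x hx y hy).resolve_right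
      (not_or.2 ⟨Ne.symm hxw, Ne.symm hyw⟩)))
  obtain ⟨a₁, ha₁, ha₁U, ha₁w⟩ := exists_mem_ne_of_mem_closure (hclA hu) hU huU (Ne.symm hwu)
  obtain ⟨a₂, ha₂, ha₂V, ha₂w⟩ := exists_mem_ne_of_mem_closure (hclA hv) hV hvV (Ne.symm hwv)
  obtain ⟨b₁, hb₁, hb₁U, hb₁w⟩ := exists_mem_ne_of_mem_closure (hclB hu) hU huU (Ne.symm hwu)
  obtain ⟨b₂, hb₂, hb₂V, hb₂w⟩ := exists_mem_ne_of_mem_closure (hclB hv) hV hvV (Ne.symm hwv)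
  have hfw_le : f w ≤ max (f a₁) (f a₂) :=
    (between a₁ ⟨ha₁U, .inl ha₁⟩ a₂ ⟨ha₂V, .inl ha₂⟩ ha₁w ha₂w).2
  have hfw_ge : min (f b₁) (f b₂) ≤ f w :=
    (between b₁ ⟨hb₁U, .inr hb₁⟩ b₂ ⟨hb₂V, .inr hb₂⟩ hb₁w hb₂w).1
  have hgap : max (f a₁) (f a₂) < min (f b₁) (f b₂) :=
    max_lt (lt_min (hlt _ ha₁ _ hb₁) (hlt _ ha₁ _ hb₂)) (lt_min (hlt _ ha₂ _ hb₁) (hlt _ ha₂ _ hb₂))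
  linarith

end

/-- Let `(X, τ)` be compact Hausdorff and `R` a ternary relation on `X`
(with `[u,v] = {x | R u x v} ∪ {u,v}`) which is weakly `τ`-stable.  Then every `R`-monotone
function `f : X → ℝ` is fragmented: its restriction to every nonempty closed subset has a
point of continuity. -/
theorem stmt_6 {X : Type*} [TopologicalSpace X] [CompactSpace X] [T2Space X]
    (R : X → X → X → Prop)
    (hstable : ∀ K : Set X, K.Infinite → ∃ u ∈ K, ∃ v ∈ K, u ≠ v ∧
      ∃ w : X, R u w v ∧ w ≠ u ∧ w ≠ v ∧
        ∃ U V : Set X, IsOpen U ∧ u ∈ U ∧ IsOpen V ∧ v ∈ V ∧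
          ∀ x ∈ U ∩ K, ∀ y ∈ V ∩ K, (R x w y ∨ w = x ∨ w = y))
    (f : X → ℝ)
    (hmono : ∀ u w v : X, R u w v → min (f u) (f v) ≤ f w ∧ f w ≤ max (f u) (f v)) :
    ∀ Y : Set X, Y.Nonempty → IsClosed Y → ∃ y ∈ Y, ContinuousWithinAt f Y y := by
  intro Y hY hYcl
  by_contra! hdisc
  have : CompactSpace Y := isCompact_iff_compactSpace.1 hYcl.isCompact
  let A (pq : {pq : ℚ × ℚ // pq.1 < pq.2}) : Set X := {x ∈ Y | f x ≤ pq.1.1}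
  let B (pq : {pq : ℚ × ℚ // pq.1 < pq.2}) : Set X := {x ∈ Y | pq.1.2 ≤ f x}
  have hcover : Y ⊆ ⋃ pq, closure (A pq) ∩ closure (B pq) := fun y hy => by
    obtain ⟨p, q, hpq, hy⟩ := exists_rat_mem_closure_of_not_continuousWithinAt hy (hdisc y hy)
    exact mem_iUnion.2 ⟨⟨(p, q), hpq⟩, hy⟩
  obtain ⟨pq, U, hU, ⟨y, hyU, hyY⟩, hUY⟩ := exists_isOpen_inter_subset_of_subset_iUnion hY
    (fun _ => isClosed_closure.inter isClosed_closure) hcover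
  refine WeaklyStable.false_of_subset_closure hstable hmono (A := U ∩ A pq) (B := U ∩ B pq)
    (mem_closure_iff.1 (hUY ⟨hyU, hyY⟩).1 U hU hyU)
    (fun x hx => hU.inter_closure ⟨hx.1, (hUY ⟨hx.1, hx.2.1⟩).2⟩)
    (fun x hx => hU.inter_closure ⟨hx.1, (hUY ⟨hx.1, hx.2.1⟩).1⟩)
    fun a ha b hb => ?_
  have hpq : (pq.1.1 : ℝ) < pq.1.2 := mod_cast pq.2
  linarith [ha.2.2, hb.2.2]
end

section
/- Let D be a dendron. Then every (not necessarily continuous) interval-preserving function f : D → ℝ (i.e., whenever w is between u and v in D, min(f(u), f(v)) ≤ f(w) ≤ max(f(u), f(v))) is fragmented: for every nonempty closed subset Y ⊆ D the restriction f|_Y has at least one point of continuity. -/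
/-- Key lemma: no set can have both `{f ≤ a}` and `{f ≥ b}` dense in it. -/
lemma aux1 {D : Type*} [TopologicalSpace D]
    (hsep : ∀ u v : D, u ≠ v → ∃ w, Separates w u v)
    (f : D → ℝ)
    (hmono : ∀ u w v : D, Between u w v → min (f u) (f v) ≤ f w ∧ f w ≤ max (f u) (f v))
    (Z : Set D) (hZne : Z.Nonempty) (a b : ℝ) (hab : a < b) :
    ∃ O : Set D, IsOpen O ∧ (O ∩ Z).Nonempty ∧
      ((∀ x ∈ O ∩ Z, a < f x) ∨ (∀ x ∈ O ∩ Z, f x < b)) := by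
  by_contra h
  push_neg at h
  have h' : ∀ O : Set D, IsOpen O → (O ∩ Z).Nonempty →
      (∃ x ∈ O ∩ Z, f x ≤ a) ∧ (∃ x ∈ O ∩ Z, b ≤ f x) := by
    intro O hO hne
    have := h O hO hne
    constructor
    · obtain ⟨x, hx1, hx2⟩ := this.1
      exact ⟨x, hx1, hx2⟩
    · obtain ⟨x, hx1, hx2⟩ := this.2
      exact ⟨x, hx1, hx2⟩
  obtain ⟨⟨u, huZ, hua⟩, ⟨v, hvZ, hvb⟩⟩ := h' Set.univ isOpen_univ (by simpa using hZne)
  have huv : u ≠ v := by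
    rintro rfl; linarith
  obtain ⟨w, U, V, hU, hV, huU, hvV, hdisj, hcompl⟩ := hsep u v huv
  obtain ⟨⟨u1, hu1, hu1a⟩, ⟨u2, hu2, hu2b⟩⟩ := h' U hU ⟨u, huU, huZ.2⟩
  obtain ⟨⟨v1, hv1, hv1a⟩, ⟨v2, hv2, hv2b⟩⟩ := h' V hV ⟨v, hvV, hvZ.2⟩
  have s1 : Separates w u1 v1 := ⟨U, V, hU, hV, hu1.1, hv1.1, hdisj, hcompl⟩
  have s2 : Separates w u2 v2 := ⟨U, V, hU, hV, hu2.1, hv2.1, hdisj, hcompl⟩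
  have m1 := (hmono u1 w v1 (Or.inl s1)).2
  have m2 := (hmono u2 w v2 (Or.inl s2)).1
  have hmax : max (f u1) (f v1) ≤ a := max_le hu1a hv1a
  have hmin : b ≤ min (f u2) (f v2) := le_min hu2b hv2b
  linarith

/-- Iterated shrinking of oscillation. -/
lemma aux2 {D : Type*} [TopologicalSpace D]
    (hsep : ∀ u v : D, u ≠ v → ∃ w, Separates w u v)
    (f : D → ℝ)
    (hmono : ∀ u w v : D, Between u w v → min (f u) (f v) ≤ f w ∧ f w ≤ max (f u) (f v))
    (ε : ℝ) (hε : 0 < ε) :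
    ∀ k : ℕ, ∀ Z O : Set D, IsOpen O → (O ∩ Z).Nonempty →
      ∀ lo hi : ℝ, (∀ x ∈ O ∩ Z, lo ≤ f x ∧ f x ≤ hi) → hi - lo ≤ ε * (3/2)^k →
      ∃ O' : Set D, IsOpen O' ∧ (O' ∩ Z).Nonempty ∧
        ∀ x ∈ O' ∩ Z, ∀ y ∈ O' ∩ Z, |f x - f y| ≤ ε := by
  intro k
  induction k with
  | zero =>
    intro Z O hO hne lo hi hbd hlen
    refine ⟨O, hO, hne, ?_⟩
    intro x hx y hy
    have h1 := hbd x hx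
    have h2 := hbd y hy
    rw [pow_zero, mul_one] at hlen
    rw [abs_le]
    constructor <;> linarith
  | succ k ih =>
    intro Z O hO hne lo hi hbd hlen
    by_cases hle : hi - lo ≤ ε
    · refine ⟨O, hO, hne, ?_⟩
      intro x hx y hy
      have h1 := hbd x hx
      have h2 := hbd y hy
      rw [abs_le]
      constructor <;> linarith
    · push_neg at hle
      have hd : 0 < hi - lo := lt_trans hε hle
      have hab : lo + (hi - lo)/3 < hi - (hi - lo)/3 := by linarith
      obtain ⟨O1, hO1, hne1, hcase⟩ := aux1 hsep f hmono (closure (O ∩ Z))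
        (hne.mono subset_closure) _ _ hab
      -- O1 meets closure (O ∩ Z), so O1 ∩ O ∩ Z is nonempty
      obtain ⟨x0, hx0O1, hx0cl⟩ := hne1
      have hmeet : (O1 ∩ (O ∩ Z)).Nonempty := by
        rw [_root_.mem_closure_iff] at hx0cl
        exact hx0cl O1 hO1 hx0O1
      have hne2 : ((O1 ∩ O) ∩ Z).Nonempty := by
        obtain ⟨x, hx1, hx2, hx3⟩ := hmeet
        exact ⟨x, ⟨hx1, hx2⟩, hx3⟩
      have hsub : (O1 ∩ O) ∩ Z ⊆ O1 ∩ closure (O ∩ Z) := by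
        rintro x ⟨⟨h1, h2⟩, h3⟩
        exact ⟨h1, subset_closure ⟨h2, h3⟩⟩
      have hlen' : ∀ e : ℝ, e = ε * (3/2)^k → (hi - lo) ≤ e * (3/2) →
          hi - (lo + (hi-lo)/3) ≤ ε * (3/2)^k ∧ (hi - (hi-lo)/3) - lo ≤ ε * (3/2)^k := by
        intro e he hee
        constructor <;> [skip; skip] <;> rw [← he] <;> linarith
      have hpow : hi - lo ≤ (ε * (3/2)^k) * (3/2) := by
        rw [mul_assoc, ← pow_succ]
        exact hlen
      obtain ⟨hl1, hl2⟩ := hlen' _ rfl hpow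
      rcases hcase with hc | hc
      · refine ih Z (O1 ∩ O) (hO1.inter hO) hne2 (lo + (hi - lo)/3) hi ?_ hl1
        intro x hx
        have hb := hbd x ⟨hx.1.2, hx.2⟩
        exact ⟨le_of_lt (hc x (hsub hx)), hb.2⟩
      · refine ih Z (O1 ∩ O) (hO1.inter hO) hne2 lo (hi - (hi - lo)/3) ?_ hl2
        intro x hx
        have hb := hbd x ⟨hx.1.2, hx.2⟩
        exact ⟨hb.1, le_of_lt (hc x (hsub hx))⟩

/-- From global boundedness to arbitrarily small oscillation on a relatively open piece. -/
lemma aux3 {D : Type*} [TopologicalSpace D]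
    (hsep : ∀ u v : D, u ≠ v → ∃ w, Separates w u v)
    (f : D → ℝ)
    (hmono : ∀ u w v : D, Between u w v → min (f u) (f v) ≤ f w ∧ f w ≤ max (f u) (f v))
    (hbdd : ∀ x : D, -2 ≤ f x ∧ f x ≤ 2)
    (Z : Set D) (hZne : Z.Nonempty) (ε : ℝ) (hε : 0 < ε) :
    ∃ O : Set D, IsOpen O ∧ (O ∩ Z).Nonempty ∧
      ∀ x ∈ O ∩ Z, ∀ y ∈ O ∩ Z, |f x - f y| ≤ ε := by
  obtain ⟨k, hk⟩ := pow_unbounded_of_one_lt (4 / ε) (by norm_num : (1:ℝ) < 3/2)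
  have hk' : (2:ℝ) - (-2) ≤ ε * (3/2)^k := by
    rw [div_lt_iff₀ hε] at hk
    nlinarith [pow_pos (by norm_num : (0:ℝ) < 3/2) k]
  exact aux2 hsep f hmono ε hε k Z Set.univ isOpen_univ (by simpa using hZne)
    (-2) 2 (fun x _ => hbdd x) hk'


/-- Every (not necessarily continuous) interval-preserving (monotone)
real-valued function on a dendron is fragmented: its restriction to every nonempty closed
subset has a point of continuity. -/
theorem stmt_7 {D : Type*} [TopologicalSpace D] [CompactSpace D] [T2Space D] [ConnectedSpace D]
    (hsep : ∀ u v : D, u ≠ v → ∃ w, Separates w u v)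
    (f : D → ℝ)
    (hmono : ∀ u w v : D, Between u w v → min (f u) (f v) ≤ f w ∧ f w ≤ max (f u) (f v)) :
    ∀ Y : Set D, Y.Nonempty → IsClosed Y → ∃ y ∈ Y, ContinuousWithinAt f Y y := by
  intro Y hYne hYcl
  -- Replace f by arctan ∘ f to get boundedness
  set F : D → ℝ := fun x => Real.arctan (f x) with hF
  have harcmono : Monotone Real.arctan := Real.arctan_strictMono.monotone
  have hFmono : ∀ u w v : D, Between u w v → min (F u) (F v) ≤ F w ∧ F w ≤ max (F u) (F v) := by
    intro u w v hb
    obtain ⟨h1, h2⟩ := hmono u w v hb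
    constructor
    · rw [← harcmono.map_min]
      exact harcmono h1
    · rw [← harcmono.map_max]
      exact harcmono h2
  have hFbdd : ∀ x : D, -2 ≤ F x ∧ F x ≤ 2 := by
    intro x
    have h1 := Real.arctan_lt_pi_div_two (f x)
    have h2 := Real.neg_pi_div_two_lt_arctan (f x)
    have hpi := Real.pi_lt_d2
    constructor <;> simp only [hF] <;> linarith
  -- Step lemma
  have step : ∀ (n : ℕ) (O : Set D), IsOpen O → (O ∩ Y).Nonempty →
      ∃ O' : Set D, IsOpen O' ∧ (O' ∩ Y).Nonempty ∧ closure O' ⊆ O ∧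
        ∀ x ∈ O' ∩ Y, ∀ z ∈ O' ∩ Y, |F x - F z| ≤ 1/(n+1) := by
    intro n O hO hne
    have hεpos : (0:ℝ) < 1/(n+1) := by positivity
    obtain ⟨O1, hO1, hne1, hosc1⟩ := aux3 hsep F hFmono hFbdd (O ∩ Y) hne _ hεpos
    -- O2 := O1 ∩ O
    have hO2 : IsOpen (O1 ∩ O) := hO1.inter hO
    obtain ⟨p, hp1, hp2, hp3⟩ := hne1
    have hpmem : p ∈ O1 ∩ O := ⟨hp1, hp2⟩
    obtain ⟨t, htn, htc, hts⟩ := exists_mem_nhds_isClosed_subset (hO2.mem_nhds hpmem)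
    refine ⟨interior t, isOpen_interior, ⟨p, mem_interior_iff_mem_nhds.2 htn, hp3⟩, ?_, ?_⟩
    · calc closure (interior t) ⊆ t := closure_minimal interior_subset htc
        _ ⊆ O1 ∩ O := hts
        _ ⊆ O := Set.inter_subset_right
    · intro x hx z hz
      have hx' : x ∈ O1 ∩ (O ∩ Y) := by
        have := hts (interior_subset hx.1)
        exact ⟨this.1, this.2, hx.2⟩
      have hz' : z ∈ O1 ∩ (O ∩ Y) := by
        have := hts (interior_subset hz.1)
        exact ⟨this.1, this.2, hz.2⟩
      exact hosc1 x hx' z hz'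
  choose! g hgo hgne hgcl hgosc using step
  set seq : ℕ → Set D := fun n => Nat.rec Set.univ (fun n O => g n O) n with hseq
  have hseqS : ∀ n, seq (n+1) = g n (seq n) := fun n => rfl
  have hinv : ∀ n, IsOpen (seq n) ∧ (seq n ∩ Y).Nonempty := by
    intro n
    induction n with
    | zero =>
      refine ⟨isOpen_univ, ?_⟩
      show (Set.univ ∩ Y).Nonempty
      simpa using hYne
    | succ n ih =>
      rw [hseqS]
      exact ⟨hgo n _ ih.1 ih.2, hgne n _ ih.1 ih.2⟩
  have hcl : ∀ n, closure (seq (n+1)) ⊆ seq n := by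
    intro n
    rw [hseqS]
    exact hgcl n _ (hinv n).1 (hinv n).2
  have hosc : ∀ n, ∀ x ∈ seq (n+1) ∩ Y, ∀ z ∈ seq (n+1) ∩ Y, |F x - F z| ≤ 1/(n+1) := by
    intro n
    rw [hseqS]
    exact hgosc n _ (hinv n).1 (hinv n).2
  -- nested compacts
  set C : ℕ → Set D := fun n => closure (seq (n+1)) ∩ Y with hC
  have hCcl : ∀ n, IsClosed (C n) := fun n => isClosed_closure.inter hYcl
  have hCcomp : ∀ n, IsCompact (C n) := fun n => (hCcl n).isCompact
  have hCne : ∀ n, (C n).Nonempty := by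
    intro n
    obtain ⟨x, hx1, hx2⟩ := (hinv (n+1)).2
    exact ⟨x, subset_closure hx1, hx2⟩
  have hCmono : ∀ n, C (n+1) ⊆ C n := by
    intro n
    rintro x ⟨hx1, hx2⟩
    exact ⟨subset_closure (hcl (n+1) hx1), hx2⟩
  obtain ⟨y, hy⟩ := IsCompact.nonempty_iInter_of_sequence_nonempty_isCompact_isClosed
    C hCmono hCne (hCcomp 0) hCcl
  simp only [Set.mem_iInter, hC, Set.mem_inter_iff] at hy
  have hyY : y ∈ Y := (hy 0).2
  have hyO : ∀ n, y ∈ seq (n+1) := fun n => hcl (n+1) (hy (n+1)).1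
  refine ⟨y, hyY, ?_⟩
  -- continuity of F within Y at y
  have hFcont : ContinuousWithinAt F Y y := by
    rw [ContinuousWithinAt, Metric.tendsto_nhds]
    intro ε hε
    obtain ⟨n, hn⟩ := exists_nat_one_div_lt hε
    have hmem : seq (n+1) ∈ nhdsWithin y Y :=
      nhdsWithin_le_nhds ((hinv (n+1)).1.mem_nhds (hyO n))
    filter_upwards [hmem, self_mem_nhdsWithin] with x hx hxY
    have := hosc n x ⟨hx, hxY⟩ y ⟨hyO n, hyY⟩
    rw [Real.dist_eq]
    calc |F x - F y| ≤ 1/(n+1) := this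
      _ < ε := by exact_mod_cast hn
  -- transfer back through tan
  have htan : ContinuousAt Real.tan (F y) := by
    rw [Real.continuousAt_tan]
    exact ne_of_gt (Real.cos_arctan_pos (f y))
  have := htan.comp_continuousWithinAt hFcont
  have heq : (Real.tan ∘ F) = f := by
    funext x
    simp [hF, Real.tan_arctan]
  rwa [heq] at this
end

section
/- Let D be a dendron. Then no sequence (f_n) of continuous interval-preserving functions f_n : D → ℝ with values in [0,1] is independent; that is, there do not exist reals a < b such that for all disjoint finite subsets P, Q ⊆ ℕ one has ⋂_{n∈P} {x : f_n(x) < a} ∩ ⋂_{n∈Q} {x : f_n(x) > b} ≠ ∅. -/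
set_option linter.unusedSectionVars false

section Aux
variable {D : Type*} [TopologicalSpace D]

lemma helper_pc {K A B : Set D} (hK : IsPreconnected K) (hA : IsOpen A) (hB : IsOpen B)
    (hd : Disjoint A B) (hcov : K ⊆ A ∪ B) (h1 : (K ∩ A).Nonempty) (h2 : (K ∩ B).Nonempty) :
    False := by
  obtain ⟨x, -, hxA, hxB⟩ := hK A B hA hB hcov h1 h2
  exact Set.disjoint_left.mp hd hxA hxB

lemma cut_w_not_left {w : D} {U V : Set D} (hc : ({w}ᶜ : Set D) = U ∪ V) : w ∉ U := by
  intro h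
  have : w ∈ ({w}ᶜ : Set D) := by rw [hc]; exact Or.inl h
  exact this rfl

lemma cut_w_not_right {w : D} {U V : Set D} (hc : ({w}ᶜ : Set D) = U ∪ V) : w ∉ V := by
  intro h
  have : w ∈ ({w}ᶜ : Set D) := by rw [hc]; exact Or.inr h
  exact this rfl

/-- The `V`-side together with the cut point avoids any point of `U`. -/
lemma side_subset_compl {w w' : D} {U V : Set D} (hd : Disjoint U V)
    (hc : ({w}ᶜ : Set D) = U ∪ V) (hw' : w' ∈ U) : V ∪ {w} ⊆ ({w'}ᶜ : Set D) := by
  intro k hk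
  rcases hk with hk | hk
  · exact fun he => Set.disjoint_left.mp hd hw' (he ▸ hk)
  · rcases hk with rfl
    exact fun he => cut_w_not_left hc (he ▸ hw')

variable [PreconnectedSpace D]

lemma side_preconnected {w : D} {U V : Set D} (hU : IsOpen U) (hV : IsOpen V)
    (hd : Disjoint U V) (hc : ({w}ᶜ : Set D) = U ∪ V) : IsPreconnected (U ∪ {w}) := by
  intro A B hA hB hcov h1 h2
  by_contra hne
  rw [Set.not_nonempty_iff_eq_empty] at hne
  have main : ∀ A B : Set D, IsOpen A → IsOpen B → (U ∪ {w}) ⊆ A ∪ B →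
      ((U ∪ {w}) ∩ (A ∩ B)) = ∅ → w ∈ A → ((U ∪ {w}) ∩ B).Nonempty → False := by
    intro A B hA hB hcov hne hwA ⟨y, hyUw, hyB⟩
    have hyU : y ∈ U := by
      rcases hyUw with hyU | hyw
      · exact hyU
      · rcases hyw with rfl
        exact absurd (Set.eq_empty_iff_forall_notMem.mp hne y ⟨Or.inr rfl, hwA, hyB⟩) (fun h => h)
    have hpc := PreconnectedSpace.isPreconnected_univ (α := D)
    obtain ⟨d, -, ⟨hdB, hdU⟩, hdAV⟩ :=
      hpc (B ∩ U) (A ∪ V) (hB.inter hU) (hA.union hV)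
        (by
          intro u _
          by_cases hu : u = w
          · exact Or.inr (Or.inl (hu ▸ hwA))
          · have : u ∈ U ∪ V := by rw [← hc]; exact hu
            rcases this with h | h
            · rcases hcov (Or.inl h) with h' | h'
              · exact Or.inr (Or.inl h')
              · exact Or.inl ⟨h', h⟩
            · exact Or.inr (Or.inr h))
        ⟨y, trivial, hyB, hyU⟩ ⟨w, trivial, Or.inl hwA⟩
    rcases hdAV with hdA | hdV
    · exact Set.eq_empty_iff_forall_notMem.mp hne d ⟨Or.inl hdU, hdA, hdB⟩
    · exact Set.disjoint_left.mp hd hdU hdV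
  have hw : w ∈ U ∪ {w} := Or.inr rfl
  rcases hcov hw with hwA | hwB
  · exact main A B hA hB hcov hne hwA h2
  · refine main B A hB hA (fun u hu => (hcov hu).symm) ?_ hwB h1
    rw [← hne]; ext u; simp only [Set.mem_inter_iff, Set.mem_empty_iff_false]; tauto

end Aux

/-- If `z` is distinct from `x, y` and does not separate them, then some cut point
separates `z` from both `x` and `y` simultaneously. -/
lemma lemM {D : Type*} [TopologicalSpace D] [ConnectedSpace D] [T1Space D]
    (hsep : ∀ u v : D, u ≠ v → ∃ w, Separates w u v)
    {x y z : D} (hzx : z ≠ x) (hzy : z ≠ y) (hns : ¬ Separates z x y) :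
    ∃ w U V, IsOpen U ∧ IsOpen V ∧ x ∈ U ∧ y ∈ U ∧ z ∈ V ∧ Disjoint U V ∧
      ({w}ᶜ : Set D) = U ∪ V := by
  by_contra hcon
  -- the union of all `y`-sides of cuts separating `y` from `z`
  set V : Set D := ⋃₀ {U' | ∃ w' V'', IsOpen U' ∧ IsOpen V'' ∧ y ∈ U' ∧ z ∈ V'' ∧
      Disjoint U' V'' ∧ ({w'}ᶜ : Set D) = U' ∪ V''} with hVdef
  have hVopen : IsOpen V := by
    apply isOpen_sUnion
    rintro U' ⟨w', V'', hU', hV'', -⟩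
    exact hU'
  have hyV : y ∈ V := by
    obtain ⟨w', U', V'', hU', hV'', hyU', hzV'', hd', hc'⟩ := hsep y z hzy.symm
    exact ⟨U', ⟨w', V'', hU', hV'', hyU', hzV'', hd', hc'⟩, hyU'⟩
  have hzV : z ∉ V := by
    rintro ⟨U', ⟨w', V'', hU', hV'', hyU', hzV'', hd', hc'⟩, hzU'⟩
    exact Set.disjoint_left.mp hd' hzU' hzV''
  have hxV : x ∉ V := by
    rintro ⟨U', ⟨w', V'', hU', hV'', hyU', hzV'', hd', hc'⟩, hxU'⟩
    exact hcon ⟨w', U', V'', hU', hV'', hxU', hyU', hzV'', hd', hc'⟩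
  have hclosure : closure V ⊆ V ∪ {z} := by
    intro t ht
    by_cases htz : t = z
    · exact Or.inr htz
    · left
      obtain ⟨w₀, U₀, V₀, hU₀, hV₀, htU₀, hzV₀, hd₀, hc₀⟩ := hsep t z htz
      obtain ⟨v, hvU₀, hvV⟩ := mem_closure_iff.mp ht U₀ hU₀ htU₀
      obtain ⟨U', ⟨w', V'', hU', hV'', hyU', hzV'', hd', hc'⟩, hvU'⟩ := hvV
      by_cases hyU₀ : y ∈ U₀
      · exact ⟨U₀, ⟨w₀, V₀, hU₀, hV₀, hyU₀, hzV₀, hd₀, hc₀⟩, htU₀⟩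
      · by_cases hww : w₀ = w'
        · -- merge the two cuts at the common point
          refine ⟨U₀ ∪ U', ⟨w₀, V₀ ∩ V'', hU₀.union hU', hV₀.inter hV'', Or.inr hyU',
            ⟨hzV₀, hzV''⟩, ?_, ?_⟩, Or.inl htU₀⟩
          · rw [Set.disjoint_left]
            rintro u (hu | hu) ⟨hu₀, hu'⟩
            · exact Set.disjoint_left.mp hd₀ hu hu₀
            · exact Set.disjoint_left.mp hd' hu hu'
          · ext u
            simp only [Set.mem_compl_iff, Set.mem_singleton_iff, Set.mem_union,
              Set.mem_inter_iff]
            constructor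
            · intro hu
              have h1 : u ∈ U₀ ∪ V₀ := by rw [← hc₀]; exact hu
              have h2 : u ∈ U' ∪ V'' := by rw [← hc', ← hww]; exact hu
              rcases h1 with h1 | h1
              · exact Or.inl (Or.inl h1)
              · rcases h2 with h2 | h2
                · exact Or.inl (Or.inr h2)
                · exact Or.inr ⟨h1, h2⟩
            · rintro (hu | hu) he
              · rcases hu with hu | hu
                · exact cut_w_not_left hc₀ (he ▸ hu)
                · exact cut_w_not_left hc' (hww ▸ he ▸ hu)
              · exact cut_w_not_right hc₀ (he ▸ hu.1)
        · have hw₀ : w₀ ∈ U' ∪ V'' := by rw [← hc']; exact hww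
          rcases hw₀ with hw₀ | hw₀
          · -- w₀ on the y-side of the cut at w': the z-side of w' is contained in U'
            have hK : IsPreconnected (V'' ∪ {w'}) :=
              side_preconnected hV'' hU' hd'.symm (hc'.trans (Set.union_comm _ _))
            have hKsub : V'' ∪ {w'} ⊆ U₀ ∪ V₀ := by
              intro k hk
              rw [← hc₀]
              exact side_subset_compl hd' hc' hw₀ hk
            by_cases hKU : ((V'' ∪ {w'}) ∩ U₀).Nonempty
            · exact absurd (helper_pc hK hU₀ hV₀ hd₀ hKsub hKU
                ⟨z, Or.inl hzV'', hzV₀⟩) (fun h => h)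
            · have hsub : U₀ ⊆ U' := by
                intro u hu
                have hu1 : u ∉ V'' ∪ {w'} := fun h => hKU ⟨u, h, hu⟩
                have hu2 : u ≠ w' := fun he => hu1 (Or.inr he)
                have : u ∈ U' ∪ V'' := by rw [← hc']; exact hu2
                rcases this with h | h
                · exact h
                · exact absurd (Or.inl h : u ∈ V'' ∪ {w'}) hu1
              exact ⟨U', ⟨w', V'', hU', hV'', hyU', hzV'', hd', hc'⟩, hsub htU₀⟩
          · -- w₀ on the z-side of the cut at w': the y-side of w' must be inside U₀,
            -- contradiction since y ∉ U₀
            have hK : IsPreconnected (U' ∪ {w'}) := side_preconnected hU' hV'' hd' hc'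
            have hKsub : U' ∪ {w'} ⊆ U₀ ∪ V₀ := by
              intro k hk
              rw [← hc₀]
              exact side_subset_compl hd'.symm (hc'.trans (Set.union_comm _ _)) hw₀ hk
            have hyV₀ : y ∈ V₀ := by
              rcases hKsub (Or.inl hyU') with h | h
              · exact absurd h hyU₀
              · exact h
            exact absurd (helper_pc hK hU₀ hV₀ hd₀ hKsub ⟨v, Or.inl hvU', hvU₀⟩
              ⟨y, Or.inl hyU', hyV₀⟩) (fun h => h)
  have hVzclosed : IsClosed (V ∪ {z}) := by
    apply isClosed_of_closure_subset
    rw [closure_union, closure_singleton]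
    exact Set.union_subset (hclosure.trans (by intro u; exact id)) (by
      intro u hu; exact Or.inr hu)
  refine hns ⟨(V ∪ {z})ᶜ, V, hVzclosed.isOpen_compl, hVopen, ?_, hyV, ?_, ?_⟩
  · intro h
    rcases h with h | h
    · exact hxV h
    · exact hzx (Set.mem_singleton_iff.mp h).symm
  · rw [Set.disjoint_left]
    intro u hu huV
    exact hu (Or.inl huV)
  · ext u
    simp only [Set.mem_compl_iff, Set.mem_singleton_iff, Set.mem_union]
    constructor
    · intro hu
      by_cases huV : u ∈ V
      · exact Or.inr huV
      · exact Or.inl (fun h => by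
          rcases h with h | h
          · exact huV h
          · exact hu h)
    · rintro (hu | hu)
      · exact fun he => hu (Or.inr he)
      · exact fun he => hzV (he ▸ hu)

lemma compl_side {D : Type*} [TopologicalSpace D] {w : D} {U V : Set D}
    (hd : Disjoint U V) (hc : ({w}ᶜ : Set D) = U ∪ V) : (U ∪ {w})ᶜ = V := by
  ext u
  simp only [Set.mem_compl_iff, Set.mem_union, Set.mem_singleton_iff, not_or]
  constructor
  · rintro ⟨huU, huw⟩
    have : u ∈ U ∪ V := by rw [← hc]; exact huw
    rcases this with h | h
    · exact absurd h huU
    · exact h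
  · intro huV
    exact ⟨fun h => Set.disjoint_left.mp hd h huV, fun he => cut_w_not_right hc (he ▸ huV)⟩

lemma key {D : Type*} [TopologicalSpace D] [CompactSpace D] [T2Space D] [ConnectedSpace D]
    (hsep : ∀ u v : D, u ≠ v → ∃ w, Separates w u v)
    {f g : D → ℝ} (hf : Continuous f) (hg : Continuous g)
    (hfm : ∀ u w v : D, Between u w v → min (f u) (f v) ≤ f w ∧ f w ≤ max (f u) (f v))
    (hgm : ∀ u w v : D, Between u w v → min (g u) (g v) ≤ g w ∧ g w ≤ max (g u) (g v))
    {a b : ℝ} (hab : a < b) {p q s : D}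
    (hp0 : f p < a) (hp1 : g p < a) (hq0 : f q < a) (hq1 : b < g q)
    (hs0 : b < f s) (hs1 : b < g s) :
    ∃ m, f m ≤ a ∧ b ≤ g m ∧ Separates m p s := by
  classical
  have hqp : q ≠ p := fun h => by rw [h] at hq1; linarith
  have hqs : q ≠ s := fun h => by rw [h] at hq0; linarith
  by_cases hB : Between p q s
  · rcases hB with h | h | h
    · exact ⟨q, le_of_lt hq0, le_of_lt hq1, h⟩
    · exact absurd h hqp
    · exact absurd h hqs
  have hnsep : ¬ Separates q p s := fun h => hB (Or.inl h)
  obtain ⟨w₀, U₀, V₀, hU₀, hV₀, hpU₀, hsU₀, hqV₀, hd₀, hc₀⟩ := lemM hsep hqp hqs hnsep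
  let ι := {c : D × Set D × Set D // IsOpen c.2.1 ∧ IsOpen c.2.2 ∧ p ∈ c.2.1 ∧ s ∈ c.2.1 ∧
      q ∈ c.2.2 ∧ Disjoint c.2.1 c.2.2 ∧ ({c.1}ᶜ : Set D) = c.2.1 ∪ c.2.2}
  haveI hnel : Nonempty ι := ⟨⟨(w₀, U₀, V₀), hU₀, hV₀, hpU₀, hsU₀, hqV₀, hd₀, hc₀⟩⟩
  -- upper bounds for pairs of cuts (the `q`-sides are directed under inclusion)
  have hub : ∀ c₁ c₂ : ι, ∃ c₃ : ι,
      c₁.1.2.2 ∪ {c₁.1.1} ⊆ c₃.1.2.2 ∪ {c₃.1.1} ∧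
      c₂.1.2.2 ∪ {c₂.1.1} ⊆ c₃.1.2.2 ∪ {c₃.1.1} := by
    rintro ⟨⟨w₁, U₁, V₁⟩, hU₁, hV₁, hp₁, hs₁, hq₁, hd₁, hc₁⟩
      ⟨⟨w₂, U₂, V₂⟩, hU₂, hV₂, hp₂, hs₂, hq₂, hd₂, hc₂⟩
    dsimp only
    by_cases hww : w₁ = w₂
    · subst hww
      refine ⟨⟨(w₁, U₁ ∩ U₂, V₁ ∪ V₂), hU₁.inter hU₂, hV₁.union hV₂, ⟨hp₁, hp₂⟩, ⟨hs₁, hs₂⟩,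
        Or.inl hq₁, ?_, ?_⟩, ?_, ?_⟩
      · rw [Set.disjoint_left]
        rintro u ⟨hu₁, hu₂⟩ (hv | hv)
        · exact Set.disjoint_left.mp hd₁ hu₁ hv
        · exact Set.disjoint_left.mp hd₂ hu₂ hv
      · ext u
        simp only [Set.mem_compl_iff, Set.mem_singleton_iff, Set.mem_union, Set.mem_inter_iff]
        constructor
        · intro hu
          have h1 : u ∈ U₁ ∪ V₁ := by rw [← hc₁]; exact hu
          have h2 : u ∈ U₂ ∪ V₂ := by rw [← hc₂]; exact hu
          rcases h1 with h1 | h1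
          · rcases h2 with h2 | h2
            · exact Or.inl ⟨h1, h2⟩
            · exact Or.inr (Or.inr h2)
          · exact Or.inr (Or.inl h1)
        · rintro (⟨hu, -⟩ | (hu | hu)) he
          · exact cut_w_not_left hc₁ (he ▸ hu)
          · exact cut_w_not_right hc₁ (he ▸ hu)
          · exact cut_w_not_right hc₂ (he ▸ hu)
      · rintro k (hk | hk)
        · exact Or.inl (Or.inl hk)
        · exact Or.inr hk
      · rintro k (hk | hk)
        · exact Or.inl (Or.inr hk)
        · exact Or.inr hk
    · have hcomp : V₁ ∪ {w₁} ⊆ V₂ ∪ {w₂} ∨ V₂ ∪ {w₂} ⊆ V₁ ∪ {w₁} := by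
        have hw2 : w₂ ∈ U₁ ∪ V₁ := by
          rw [← hc₁]; exact fun he => hww (Set.mem_singleton_iff.mp he).symm
        rcases hw2 with hw2 | hw2
        · -- w₂ ∈ U₁ : the q-side of the first cut lies inside V₂
          left
          have hK : IsPreconnected (V₁ ∪ {w₁}) :=
            side_preconnected hV₁ hU₁ hd₁.symm (hc₁.trans (Set.union_comm _ _))
          have hKsub : V₁ ∪ {w₁} ⊆ U₂ ∪ V₂ := by
            intro k hk; rw [← hc₂]; exact side_subset_compl hd₁ hc₁ hw2 hk
          by_cases hKU : ((V₁ ∪ {w₁}) ∩ U₂).Nonempty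
          · exact (helper_pc hK hU₂ hV₂ hd₂ hKsub hKU ⟨q, Or.inl hq₁, hq₂⟩).elim
          · intro k hk
            rcases hKsub hk with h | h
            · exact absurd ⟨k, hk, h⟩ hKU
            · exact Or.inl h
        · have hw1 : w₁ ∈ U₂ ∪ V₂ := by
            rw [← hc₂]; exact fun he => hww (Set.mem_singleton_iff.mp he)
          rcases hw1 with hw1 | hw1
          · right
            have hK : IsPreconnected (V₂ ∪ {w₂}) :=
              side_preconnected hV₂ hU₂ hd₂.symm (hc₂.trans (Set.union_comm _ _))
            have hKsub : V₂ ∪ {w₂} ⊆ U₁ ∪ V₁ := by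
              intro k hk; rw [← hc₁]; exact side_subset_compl hd₂ hc₂ hw1 hk
            by_cases hKU : ((V₂ ∪ {w₂}) ∩ U₁).Nonempty
            · exact (helper_pc hK hU₁ hV₁ hd₁ hKsub hKU ⟨q, Or.inl hq₂, hq₁⟩).elim
            · intro k hk
              rcases hKsub hk with h | h
              · exact absurd ⟨k, hk, h⟩ hKU
              · exact Or.inl h
          · -- w₁ ∈ V₂ and w₂ ∈ V₁ is impossible
            exfalso
            have hK : IsPreconnected (U₂ ∪ {w₂}) := side_preconnected hU₂ hV₂ hd₂ hc₂
            have hKsub : U₂ ∪ {w₂} ⊆ U₁ ∪ V₁ := by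
              intro k hk; rw [← hc₁]
              exact side_subset_compl hd₂.symm (hc₂.trans (Set.union_comm _ _)) hw1 hk
            exact helper_pc hK hU₁ hV₁ hd₁ hKsub ⟨p, Or.inl hp₂, hp₁⟩ ⟨w₂, Or.inr rfl, hw2⟩
      rcases hcomp with h | h
      · exact ⟨⟨(w₂, U₂, V₂), hU₂, hV₂, hp₂, hs₂, hq₂, hd₂, hc₂⟩, h, subset_rfl⟩
      · exact ⟨⟨(w₁, U₁, V₁), hU₁, hV₁, hp₁, hs₁, hq₁, hd₁, hc₁⟩, subset_rfl, h⟩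
  -- cut points of cuts at least as large as a given cut
  let T : ι → Set D := fun c =>
    {x | ∃ c' : ι, (c.1.2.2 ∪ {c.1.1} ⊆ c'.1.2.2 ∪ {c'.1.1}) ∧ c'.1.1 = x}
  let S : ι → Set D := fun c => closure (T c)
  have hTmono : ∀ {c c' : ι}, (c.1.2.2 ∪ {c.1.1} ⊆ c'.1.2.2 ∪ {c'.1.1}) → T c' ⊆ T c := by
    rintro c c' hcc x ⟨c'', h1, h2⟩
    exact ⟨c'', hcc.trans h1, h2⟩
  have hSdir : Directed (· ⊇ ·) S := by
    intro c₁ c₂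
    obtain ⟨c₃, h1, h2⟩ := hub c₁ c₂
    exact ⟨c₃, closure_mono (hTmono h1), closure_mono (hTmono h2)⟩
  have hTne : ∀ c : ι, (T c).Nonempty := fun c => ⟨c.1.1, c, subset_rfl, rfl⟩
  obtain ⟨m, hm⟩ := IsCompact.nonempty_iInter_of_directed_nonempty_isCompact_isClosed S hSdir
    (fun c => (hTne c).closure) (fun c => isClosed_closure.isCompact) (fun c => isClosed_closure)
  have hmS : ∀ c : ι, m ∈ S c := Set.mem_iInter.mp hm
  -- values of f, g at all cut points
  have hfc : ∀ c : ι, f c.1.1 ≤ a ∧ b ≤ g c.1.1 := by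
    rintro ⟨⟨w, U, V⟩, hU, hV, hpU, hsU, hqV, hd, hc⟩
    have hbet1 : Between q w p :=
      Or.inl ⟨V, U, hV, hU, hqV, hpU, hd.symm, hc.trans (Set.union_comm _ _)⟩
    have hbet2 : Between q w s :=
      Or.inl ⟨V, U, hV, hU, hqV, hsU, hd.symm, hc.trans (Set.union_comm _ _)⟩
    constructor
    · exact le_of_lt (lt_of_le_of_lt (hfm q w p hbet1).2 (max_lt hq0 hp0))
    · exact le_trans (le_min (le_of_lt hq1) (le_of_lt hs1)) (hgm q w s hbet2).1
  have hma : f m ≤ a ∧ b ≤ g m := by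
    have hclosed : IsClosed {x : D | f x ≤ a ∧ b ≤ g x} :=
      (isClosed_le hf continuous_const).inter (isClosed_le continuous_const hg)
    have c0 : ι := Classical.arbitrary ι
    have hsub : T c0 ⊆ {x : D | f x ≤ a ∧ b ≤ g x} := by
      rintro x ⟨c', -, rfl⟩
      exact hfc c'
    exact closure_minimal hsub hclosed (hmS c0)
  -- m lies on the {p,s}-side of every cut
  have hmb : ∀ c : ι, m ∈ c.1.2.1 ∪ {c.1.1} := by
    rintro ⟨⟨w, U, V⟩, hUo, hVo, hpU, hsU, hqV, hd, hc⟩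
    have hsub : T ⟨(w, U, V), hUo, hVo, hpU, hsU, hqV, hd, hc⟩ ⊆ U ∪ {w} := by
      rintro x ⟨c', hcc', rfl⟩
      by_contra hx
      have hxn : c'.1.1 ≠ w := fun he => hx (Or.inr he)
      have hxUV : c'.1.1 ∈ U ∪ V := by rw [← hc]; exact hxn
      have hxV : c'.1.1 ∈ V := by
        rcases hxUV with h | h
        · exact absurd (Or.inl h : c'.1.1 ∈ U ∪ {w}) hx
        · exact h
      have hw : w ∈ c'.1.2.2 ∪ {c'.1.1} := hcc' (Or.inr rfl)
      obtain ⟨hU', hV', hpU', hsU', hqV', hd', hc'⟩ := c'.2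
      rcases hw with hw | hw
      · have hK : IsPreconnected (c'.1.2.1 ∪ {c'.1.1}) := side_preconnected hU' hV' hd' hc'
        have hKsub : c'.1.2.1 ∪ {c'.1.1} ⊆ U ∪ V := by
          intro k hk; rw [← hc]
          exact side_subset_compl hd'.symm (hc'.trans (Set.union_comm _ _)) hw hk
        exact helper_pc hK hUo hVo hd hKsub ⟨p, Or.inl hpU', hpU⟩ ⟨c'.1.1, Or.inr rfl, hxV⟩
      · exact cut_w_not_right hc ((Set.mem_singleton_iff.mp hw) ▸ hxV)
    have hclosedside : IsClosed (U ∪ {w}) := by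
      rw [← isOpen_compl_iff, compl_side hd hc]; exact hVo
    exact closure_minimal hsub hclosedside (hmS _)
  -- m is a cluster point of the cut points
  have hmcl : ∀ W : Set D, IsOpen W → m ∈ W → ∃ c : ι, c.1.1 ∈ W := by
    intro W hW hmW
    obtain ⟨x, hxW, c', -, rfl⟩ := mem_closure_iff.mp (hmS (Classical.arbitrary ι)) W hW hmW
    exact ⟨c', hxW⟩
  have hmp : m ≠ p := fun he => by rw [he] at hma; linarith [hma.2]
  have hms : m ≠ s := fun he => by rw [he] at hma; linarith [hma.1]
  have hbet : Separates m p s := by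
    by_contra hnsepm
    obtain ⟨w', U', V', hU', hV', hpU', hsU', hmV', hd', hc'⟩ := lemM hsep hmp hms hnsepm
    have hqpos : q = w' ∨ q ∈ U' ∪ V' := by
      by_cases h : q = w'
      · exact Or.inl h
      · right; rw [← hc']; exact h
    rcases hqpos with hqw | hqUV
    · -- q is the cut point separating m from {p, s}
      obtain ⟨c⟩ := hnel
      obtain ⟨⟨w, U, V⟩, hUo, hVo, hpU, hsU, hqV, hd, hc⟩ := c
      by_cases hcV' : w ∈ V'
      · -- K' := U' ∪ {w'} contains p and w' = q, avoids w
        exact helper_pc (side_preconnected hU' hV' hd' hc') hUo hVo hd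
          (by intro k hk; rw [← hc]
              exact side_subset_compl hd'.symm (hc'.trans (Set.union_comm _ _)) hcV' hk)
          ⟨p, Or.inl hpU', hpU⟩ ⟨w', Or.inr rfl, hqw ▸ hqV⟩
      · have hwK : w ∉ V' ∪ {w'} := by
          rintro (h | h)
          · exact hcV' h
          · rw [Set.mem_singleton_iff] at h
            exact cut_w_not_right (h ▸ hc) (hqw ▸ hqV)
        have hmU : m ∈ U := by
          have := hmb ⟨(w, U, V), hUo, hVo, hpU, hsU, hqV, hd, hc⟩
          rcases this with h | h
          · exact h
          · exfalso
            have hmw : m = w := h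
            exact hcV' (hmw ▸ hmV')
        exact helper_pc (side_preconnected hV' hU' hd'.symm (hc'.trans (Set.union_comm _ _)))
          hUo hVo hd
          (by intro k hk; rw [← hc]
              intro he
              have hkw : k = w := he
              exact hwK (hkw ▸ hk))
          ⟨m, Or.inl hmV', hmU⟩ ⟨w', Or.inr rfl, hqw ▸ hqV⟩
    rcases hqUV with hqU' | hqV'
    · -- q on the {p,s}-side of the new cut: impossible by the cluster property
      obtain ⟨c, hwcV'⟩ := hmcl V' hV' hmV'
      obtain ⟨⟨w, U, V⟩, hUo, hVo, hpU, hsU, hqV, hd, hc⟩ := c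
      have hwcV'' : w ∈ V' := hwcV'
      have hww' : w' ≠ w := fun he => cut_w_not_right hc' (he ▸ hwcV'')
      have hw'pos : w' ∈ U ∪ V := by
        rw [← hc]; exact fun he => hww' (Set.mem_singleton_iff.mp he)
      rcases hw'pos with h | h
      · exact helper_pc (side_preconnected hVo hUo hd.symm (hc.trans (Set.union_comm _ _)))
          hU' hV' hd'
          (by intro k hk; rw [← hc']; exact side_subset_compl hd hc h hk)
          ⟨q, Or.inl hqV, hqU'⟩ ⟨w, Or.inr rfl, hwcV''⟩
      · exact helper_pc (side_preconnected hUo hVo hd hc) hU' hV' hd'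
          (by intro k hk; rw [← hc']
              exact side_subset_compl hd.symm (hc.trans (Set.union_comm _ _)) h hk)
          ⟨p, Or.inl hpU, hpU'⟩ ⟨w, Or.inr rfl, hwcV''⟩
    · -- q on the m-side: the new cut is itself a member of ι, contradicting hmb
      have := hmb ⟨(w', U', V'), hU', hV', hpU', hsU', hqV', hd', hc'⟩
      rcases this with h | h
      · exact Set.disjoint_left.mp hd' h hmV'
      · have hmw : m = w' := h
        exact cut_w_not_right hc' (hmw ▸ hmV')
  exact ⟨m, hma.1, hma.2, hbet⟩

/-- No sequence of continuous interval-preserving `[0,1]`-valued functions on a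
dendron is independent. -/
theorem stmt_8 {D : Type*} [TopologicalSpace D] [CompactSpace D] [T2Space D] [ConnectedSpace D]
    (hsep : ∀ u v : D, u ≠ v → ∃ w, Separates w u v)
    (f : ℕ → D → ℝ) (hcont : ∀ n, Continuous (f n))
    (hrange : ∀ n x, f n x ∈ Set.Icc (0 : ℝ) 1)
    (hmono : ∀ n, ∀ u w v : D, Between u w v →
      min (f n u) (f n v) ≤ f n w ∧ f n w ≤ max (f n u) (f n v)) :
    ¬ ∃ a b : ℝ, a < b ∧ ∀ P Q : Finset ℕ, Disjoint P Q →
      ((⋂ n ∈ P, {x | f n x < a}) ∩ ⋂ n ∈ Q, {x | b < f n x}).Nonempty := by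
  rintro ⟨a, b, hab, hind⟩
  obtain ⟨p, hp⟩ := hind {0, 1} ∅ (by simp)
  obtain ⟨q, hq⟩ := hind {0} {1} (by simp)
  obtain ⟨r, hr⟩ := hind {1} {0} (by simp)
  obtain ⟨s, hs⟩ := hind ∅ {0, 1} (by simp)
  simp only [Set.mem_inter_iff, Set.mem_iInter, Finset.mem_insert, Finset.mem_singleton,
    Set.mem_setOf_eq, Finset.notMem_empty, Set.iInter_of_empty, Set.iInter_univ,
    Set.mem_univ, and_true, true_and] at hp hq hr hs
  have hp0 : f 0 p < a := hp 0 (Or.inl rfl)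
  have hp1 : f 1 p < a := hp 1 (Or.inr rfl)
  have hq0 : f 0 q < a := hq.1 0 rfl
  have hq1 : b < f 1 q := hq.2 1 rfl
  have hr1 : f 1 r < a := hr.1 1 rfl
  have hr0 : b < f 0 r := hr.2 0 rfl
  have hs0 : b < f 0 s := hs 0 (Or.inl rfl)
  have hs1 : b < f 1 s := hs 1 (Or.inr rfl)
  obtain ⟨m, hm0, hm1, hmsep⟩ := key hsep (hcont 0) (hcont 1) (hmono 0) (hmono 1) hab
    hp0 hp1 hq0 hq1 hs0 hs1
  obtain ⟨m', hm'1, hm'0, hm'sep⟩ := key hsep (hcont 1) (hcont 0) (hmono 1) (hmono 0) hab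
    hp1 hp0 hr1 hr0 hs1 hs0
  obtain ⟨U, V, hU, hV, hpU, hsV, hd, hc⟩ := hmsep
  have hmm' : m' ≠ m := by
    intro h
    rw [h] at hm'1
    linarith
  have hm'UV : m' ∈ U ∪ V := by rw [← hc]; exact hmm'
  rcases hm'UV with h | h
  · have hbet : Between m' m s := Or.inl ⟨U, V, hU, hV, h, hsV, hd, hc⟩
    have h1 := (hmono 0 m' m s hbet).1
    have h2 : b ≤ min (f 0 m') (f 0 s) := le_min hm'0 (le_of_lt hs0)
    linarith
  · have hbet : Between p m m' := Or.inl ⟨U, V, hU, hV, hpU, h, hd, hc⟩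
    have h1 := (hmono 1 p m m' hbet).2
    have h2 : max (f 1 p) (f 1 m') ≤ a := max_le (le_of_lt hp1) hm'1
    linarith
end

section
/- Let D₁ and D₂ be dendrites (metrizable dendrons) and let f : D₁ → D₂ be a (not necessarily continuous) interval-preserving map, i.e., whenever w is between u and v in D₁, f(w) is between f(u) and f(v) in D₂. Then f is of Baire class 1: the preimage f⁻¹(O) of every open set O ⊆ D₂ is an F_σ subset of D₁. -/
open Set Filter Topology ENNReal

lemma isOpen_eq_iUnion_closed {X : Type*} [PseudoEMetricSpace X] {U : Set X} (hU : IsOpen U) :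
    ∃ F : ℕ → Set X, (∀ n, IsClosed (F n)) ∧ U = ⋃ n, F n := by
  refine ⟨fun n => {x | ((n : ℝ≥0∞) + 1)⁻¹ ≤ EMetric.infEdist x Uᶜ}, fun n => ?_, ?_⟩
  · exact isClosed_le continuous_const EMetric.continuous_infEdist
  · ext x
    simp only [Set.mem_iUnion, Set.mem_setOf_eq]
    constructor
    · intro hx
      have hx' : x ∉ closure Uᶜ := by
        rw [hU.isClosed_compl.closure_eq]
        exact fun h => h hx
      have hpos : 0 < EMetric.infEdist x Uᶜ :=
        EMetric.infEdist_pos_iff_notMem_closure.mpr hx'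
      obtain ⟨n, hn⟩ := ENNReal.exists_inv_nat_lt hpos.ne'
      refine ⟨n, le_trans (ENNReal.inv_le_inv.mpr ?_) hn.le⟩
      exact le_self_add
    · rintro ⟨n, hn⟩
      by_contra hxU
      have h0 : EMetric.infEdist x Uᶜ = 0 := EMetric.infEdist_zero_of_mem hxU
      rw [h0] at hn
      have hpos : (0 : ℝ≥0∞) < ((n : ℝ≥0∞) + 1)⁻¹ := ENNReal.inv_pos.mpr (by simp)
      exact (hpos.trans_le hn).false

lemma cut_connected {X : Type*} [TopologicalSpace X] [PreconnectedSpace X] {c : X} {P Q : Set X}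
    (hP : IsOpen P) (hQ : IsOpen Q) (hdis : Disjoint P Q) (hc : ({c}ᶜ : Set X) = P ∪ Q) :
    IsPreconnected (P ∪ {c}) := by
  have hcQ : c ∉ Q := fun h => by
    have hmem : c ∈ ({c}ᶜ : Set X) := hc ▸ (Or.inr h : c ∈ P ∪ Q)
    exact hmem rfl
  have hSc : (P ∪ {c}) = Qᶜ := by
    apply Set.eq_of_subset_of_subset
    · rintro x (hx | hx)
      · exact fun hxQ => Set.disjoint_left.mp hdis hx hxQ
      · rw [Set.mem_singleton_iff] at hx; subst hx; exact hcQ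
    · intro x hx
      by_cases hxc : x = c
      · exact Or.inr hxc
      · have hmem : x ∈ ({c}ᶜ : Set X) := hxc
        rw [hc] at hmem
        rcases hmem with h | h
        · exact Or.inl h
        · exact absurd h hx
  have hclosed : IsClosed (P ∪ {c}) := by rw [hSc]; exact hQ.isClosed_compl
  rintro u v hu hv hcov ⟨a, haS, hau⟩ ⟨b, hbS, hbv⟩
  by_contra hne
  have hE : (P ∪ {c}) ∩ (u ∩ v) = ∅ := Set.not_nonempty_iff_eq_empty.mp hne
  have key : ∀ u v : Set X, IsOpen u → IsOpen v → (P ∪ {c}) ⊆ u ∪ v →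
      (P ∪ {c}) ∩ (u ∩ v) = ∅ → c ∈ u → ∀ b, b ∈ P ∪ {c} → b ∈ v → False := by
    intro u v hu hv hcov hE hcu b hbS hbv
    have hcv : c ∉ v := fun h =>
      Set.eq_empty_iff_forall_notMem.mp hE c ⟨Or.inr rfl, hcu, h⟩
    have hCv : (P ∪ {c}) ∩ v = P ∩ v := by
      apply Set.eq_of_subset_of_subset
      · rintro x ⟨hx | hx, hxv⟩
        · exact ⟨hx, hxv⟩
        · rw [Set.mem_singleton_iff] at hx; subst hx; exact absurd hxv hcv
      · rintro x ⟨hxP, hxv⟩; exact ⟨Or.inl hxP, hxv⟩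
    have hopen : IsOpen ((P ∪ {c}) ∩ v) := by rw [hCv]; exact hP.inter hv
    have hcl : IsClosed ((P ∪ {c}) ∩ v) := by
      apply isClosed_of_closure_subset
      intro x hx
      have hxS : x ∈ P ∪ {c} :=
        hclosed.closure_subset ((closure_mono Set.inter_subset_left) hx)
      rcases hcov hxS with hxu | hxv
      · exfalso
        obtain ⟨y, hyu, hyS, hyv⟩ := mem_closure_iff.mp hx u hu hxu
        exact Set.eq_empty_iff_forall_notMem.mp hE y ⟨hyS, hyu, hyv⟩
      · exact ⟨hxS, hxv⟩
    rcases isClopen_iff.mp ⟨hcl, hopen⟩ with h0 | huniv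
    · exact Set.eq_empty_iff_forall_notMem.mp h0 b ⟨hbS, hbv⟩
    · have : c ∈ (P ∪ {c}) ∩ v := by rw [huniv]; trivial
      exact hcv this.2
  rcases hcov (Or.inr rfl : c ∈ P ∪ {c}) with hcu | hcv
  · exact key u v hu hv hcov hE hcu b hbS hbv
  · refine key v u hv hu ?_ ?_ hcv a haS hau
    · rwa [Set.union_comm v u]
    · rwa [Set.inter_comm v u]

lemma between_mem_side {X : Type*} [TopologicalSpace X] [PreconnectedSpace X]
    {σ t a b : X} {P Q : Set X}
    (hP : IsOpen P) (hQ : IsOpen Q) (hdis : Disjoint P Q) (hc : ({σ}ᶜ : Set X) = P ∪ Q)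
    (ha : a ∈ P) (hb : b ∈ P) (h : Between a t b) : t ∈ P ∪ {σ} := by
  rcases h with hsep | rfl | rfl
  · obtain ⟨R, S, hR, hS, haR, hbS, hdRS, hcR⟩ := hsep
    by_contra ht
    have htσ : t ≠ σ := fun h => ht (Or.inr h)
    have htP : t ∉ P := fun h => ht (Or.inl h)
    have hsub : P ∪ {σ} ⊆ R ∪ S := by
      intro x hx
      have hxt : x ≠ t := by
        rcases hx with hxP | hxσ
        · exact fun h => htP (h ▸ hxP)
        · rw [Set.mem_singleton_iff] at hxσ
          exact fun h => htσ (h ▸ hxσ)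
      have hmem : x ∈ ({t}ᶜ : Set X) := hxt
      rwa [hcR] at hmem
    obtain ⟨y, _, hyR, hyS⟩ :=
      cut_connected hP hQ hdis hc R S hR hS hsub ⟨a, Or.inl ha, haR⟩ ⟨b, Or.inl hb, hbS⟩
    exact Set.disjoint_left.mp hdRS hyR hyS
  · exact Or.inl ha
  · exact Or.inl hb

lemma key_finite {D₁ D₂ : Type*}
    [TopologicalSpace D₁] [CompactSpace D₁] [T2Space D₁] [ConnectedSpace D₁]
    [TopologicalSpace.MetrizableSpace D₁]
    [TopologicalSpace D₂] [CompactSpace D₂] [T2Space D₂] [ConnectedSpace D₂]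
    [TopologicalSpace.MetrizableSpace D₂]
    (hsep₁ : ∀ u v : D₁, u ≠ v → ∃ w, Separates w u v)
    (hsep₂ : ∀ u v : D₂, u ≠ v → ∃ w, Separates w u v)
    (f : D₁ → D₂)
    (hmono : ∀ u w v : D₁, Between u w v → Between (f u) (f w) (f v))
    {G O : Set D₂} (hG : IsClosed G) (hGO : G ⊆ O) (hO : IsOpen O) :
    (closure (f ⁻¹' G) \ f ⁻¹' O).Finite := by
  classical
  letI : MetricSpace D₁ := TopologicalSpace.metrizableSpaceMetric D₁
  letI : MetricSpace D₂ := TopologicalSpace.metrizableSpaceMetric D₂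
  by_contra hinf
  have hinf' : (closure (f ⁻¹' G) \ f ⁻¹' O).Infinite := hinf
  obtain ⟨x₀, hacc⟩ := hinf'.exists_accPt_principal
  set Jset := closure (f ⁻¹' G) \ f ⁻¹' O with hJdef
  rw [accPt_iff_nhds] at hacc
  -- a shrinking basis of open balls at x₀
  set N : ℕ → Set D₁ := fun i => Metric.ball x₀ (1 / ((i : ℝ) + 1)) with hNdef
  have hNopen : ∀ i, IsOpen (N i) := fun i => Metric.isOpen_ball
  have hNmem : ∀ i, x₀ ∈ N i := fun i => Metric.mem_ball_self (by positivity)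
  have hNanti : ∀ {i j : ℕ}, i ≤ j → N j ⊆ N i := by
    intro i j hij
    apply Metric.ball_subset_ball
    have h1 : (i : ℝ) ≤ (j : ℝ) := Nat.cast_le.mpr hij
    exact one_div_le_one_div_of_le (by positivity) (by linarith)
  have hNbasis : ∀ (k : ℕ) (S : Set D₁), IsOpen S → x₀ ∈ S → ∃ m, k < m ∧ N m ⊆ S := by
    intro k S hS hx
    have hSn : S ∈ 𝓝 x₀ := hS.mem_nhds hx
    obtain ⟨m, -, hm⟩ := Metric.nhds_basis_ball_inv_nat_succ.mem_iff.mp hSn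
    exact ⟨max m (k + 1), lt_of_lt_of_le (Nat.lt_succ_self k) (le_max_right _ _),
      (hNanti (le_max_left m (k + 1))).trans hm⟩
  -- choose the branch data at every scale
  have hPdata : ∀ i : ℕ, ∃ x z w : D₁, ∃ A B : Set D₁,
      x ∈ Jset ∧ x ∈ N i ∧ IsOpen A ∧ IsOpen B ∧ x ∈ A ∧ x₀ ∈ B ∧ Disjoint A B ∧
      ({w}ᶜ : Set D₁) = A ∪ B ∧ z ∈ A ∧ z ∈ N i ∧ f z ∈ G := by
    intro i
    obtain ⟨x, hx, hxne⟩ := hacc (N i) ((hNopen i).mem_nhds (hNmem i))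
    obtain ⟨hxN, hxJ⟩ := hx
    obtain ⟨w, A, B, hA, hB, hxA, hx₀B, hAB, hcomp⟩ := hsep₁ x x₀ hxne
    have hxcl : x ∈ closure (f ⁻¹' G) := hxJ.1
    have hne : ((A ∩ N i) ∩ f ⁻¹' G).Nonempty := by
      rw [mem_closure_iff] at hxcl
      exact hxcl _ (hA.inter (hNopen i)) ⟨hxA, hxN⟩
    obtain ⟨z, hz, hzG⟩ := hne
    exact ⟨x, z, w, A, B, hxJ, hxN, hA, hB, hxA, hx₀B, hAB, hcomp, hz.1, hz.2, hzG⟩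
  choose xx zz ww AA BB hxJ hxN hAopen hBopen hxA hx₀B hABdis hABcomp hzA hzN hzG using hPdata
  -- recursively selected scales
  have hrec : ∀ k : ℕ, ∃ m, k < m ∧ N m ⊆ BB k :=
    fun k => hNbasis k (BB k) (hBopen k) (hx₀B k)
  let g : ℕ → ℕ := fun n => Nat.rec 0 (fun _ gk => Classical.choose (hrec gk)) n
  have hg_lt : ∀ k, g k < g (k + 1) := fun k => (Classical.choose_spec (hrec (g k))).1
  have hg_sub : ∀ k, N (g (k + 1)) ⊆ BB (g k) := fun k => (Classical.choose_spec (hrec (g k))).2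
  have hg_mono : StrictMono g := strictMono_nat_of_lt_succ hg_lt
  have hinBB : ∀ {k l : ℕ}, k < l → N (g l) ⊆ BB (g k) := by
    intro k l hkl
    have h1 : g (k + 1) ≤ g l := hg_mono.monotone (Nat.succ_le_of_lt hkl)
    exact (hNanti h1).trans (hg_sub k)
  -- the two image sequences and their limits
  have hv_mem : ∀ k : ℕ, f (xx (g k)) ∈ Oᶜ := fun k => (hxJ (g k)).2
  obtain ⟨p, hpG, φ, hφ, hφt⟩ :=
    (hG.isCompact).tendsto_subseq (x := fun k => f (zz (g k))) (fun k => hzG (g k))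
  obtain ⟨q, hqO, ψ, hψ, hψt⟩ :=
    (hO.isClosed_compl.isCompact).tendsto_subseq (x := fun k => f (xx (g (φ k))))
      (fun k => hv_mem (φ k))
  set Φ : ℕ → ℕ := φ ∘ ψ with hΦdef
  have hΦmono : StrictMono Φ := hφ.comp hψ
  have hup : Tendsto (fun k => f (zz (g (Φ k)))) atTop (𝓝 p) := by
    have := hφt.comp hψ.tendsto_atTop
    exact this
  have hvq : Tendsto (fun k => f (xx (g (Φ k)))) atTop (𝓝 q) := hψt
  have hpq : p ≠ q := fun h => hqO (hGO (h ▸ hpG))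
  -- two distinct separators of p and q
  obtain ⟨σ₁, P, Q, hPo, hQo, hpP, hqQ, hPQ, hPQc⟩ := hsep₂ p q hpq
  have hpσ₁ : p ≠ σ₁ := by
    intro h
    have hmem : p ∈ ({σ₁}ᶜ : Set D₂) := hPQc ▸ (Or.inl hpP : p ∈ P ∪ Q)
    exact hmem h
  obtain ⟨σ₂, R, S, hRo, hSo, hpR, hσ₁S, hRS, hRSc⟩ := hsep₂ p σ₁ hpσ₁
  have hσ₂σ₁ : σ₂ ≠ σ₁ := by
    intro h
    have hmem : σ₁ ∈ ({σ₂}ᶜ : Set D₂) := hRSc ▸ (Or.inr hσ₁S : σ₁ ∈ R ∪ S)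
    exact hmem h.symm
  have hσ₂P : σ₂ ∈ P := by
    have hmem : σ₂ ∈ ({σ₁}ᶜ : Set D₂) := hσ₂σ₁
    rw [hPQc] at hmem
    rcases hmem with h | h
    · exact h
    · exfalso
      have hsub : P ∪ {σ₁} ⊆ R ∪ S := by
        intro y hy
        have hyne : y ≠ σ₂ := by
          rcases hy with hyP | hyσ
          · exact fun he => Set.disjoint_left.mp hPQ (he ▸ hyP) h
          · rw [Set.mem_singleton_iff] at hyσ
            exact fun he => hσ₂σ₁ (he ▸ hyσ)
        have hmem2 : y ∈ ({σ₂}ᶜ : Set D₂) := hyne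
        rwa [hRSc] at hmem2
      obtain ⟨y, _, hyR, hyS⟩ := cut_connected hPo hQo hPQ hPQc R S hRo hSo hsub
        ⟨p, Or.inl hpP, hpR⟩ ⟨σ₁, Or.inr rfl, hσ₁S⟩
      exact Set.disjoint_left.mp hRS hyR hyS
  have hqS : q ∈ S := by
    have hQc' : ({σ₁}ᶜ : Set D₂) = Q ∪ P := by rw [hPQc, Set.union_comm]
    have hsub : Q ∪ {σ₁} ⊆ R ∪ S := by
      intro y hy
      have hyne : y ≠ σ₂ := by
        rcases hy with hyQ | hyσ
        · exact fun he => Set.disjoint_left.mp hPQ hσ₂P (he ▸ hyQ)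
        · rw [Set.mem_singleton_iff] at hyσ
          exact fun he => hσ₂σ₁ (he ▸ hyσ)
      have hmem2 : y ∈ ({σ₂}ᶜ : Set D₂) := hyne
      rwa [hRSc] at hmem2
    rcases hsub (Or.inl hqQ) with hqR | hqS
    · exfalso
      obtain ⟨y, _, hyR, hyS⟩ := cut_connected hQo hPo hPQ.symm hQc' R S hRo hSo hsub
        ⟨q, Or.inl hqQ, hqR⟩ ⟨σ₁, Or.inr rfl, hσ₁S⟩
      exact Set.disjoint_left.mp hRS hyR hyS
    · exact hqS
  -- pick a late stage where everything is in place
  have h1 := hup.eventually_mem (hPo.mem_nhds hpP)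
  have h2 := hup.eventually_mem (hRo.mem_nhds hpR)
  have h3 := hvq.eventually_mem (hQo.mem_nhds hqQ)
  have h4 := hvq.eventually_mem (hSo.mem_nhds hqS)
  obtain ⟨M, hM⟩ := (eventually_atTop).mp (((h1.and h2).and (h3.and h4)))
  set a := g (Φ M) with hadef
  set b := g (Φ (M + 1)) with hbdef
  have hΦlt : Φ M < Φ (M + 1) := hΦmono (Nat.lt_succ_self M)
  have hzb_B : zz b ∈ BB a := hinBB hΦlt (hzN b)
  have hxb_B : xx b ∈ BB a := hinBB hΦlt (hxN b)
  have hsepz : Separates (ww a) (zz a) (zz b) :=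
    ⟨AA a, BB a, hAopen a, hBopen a, hzA a, hzb_B, hABdis a, hABcomp a⟩
  have hsepx : Separates (ww a) (xx a) (xx b) :=
    ⟨AA a, BB a, hAopen a, hBopen a, hxA a, hxb_B, hABdis a, hABcomp a⟩
  have hbz : Between (f (zz a)) (f (ww a)) (f (zz b)) := hmono _ _ _ (Or.inl hsepz)
  have hbx : Between (f (xx a)) (f (ww a)) (f (xx b)) := hmono _ _ _ (Or.inl hsepx)
  obtain ⟨⟨hzP, hzR⟩, hxQ, hxS⟩ := hM M le_rfl
  obtain ⟨⟨hzP', hzR'⟩, hxQ', hxS'⟩ := hM (M + 1) (Nat.le_succ M)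
  have e1 : f (ww a) ∈ P ∪ {σ₁} := between_mem_side hPo hQo hPQ hPQc hzP hzP' hbz
  have e2 : f (ww a) ∈ Q ∪ {σ₁} := by
    refine between_mem_side hQo hPo hPQ.symm ?_ hxQ hxQ' hbx
    rw [hPQc, Set.union_comm]
  have e3 : f (ww a) ∈ R ∪ {σ₂} := between_mem_side hRo hSo hRS hRSc hzR hzR' hbz
  have e4 : f (ww a) ∈ S ∪ {σ₂} := by
    refine between_mem_side hSo hRo hRS.symm ?_ hxS hxS' hbx
    rw [hRSc, Set.union_comm]
  have hw1 : f (ww a) = σ₁ := by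
    rcases e1 with h | h
    · rcases e2 with h' | h'
      · exact absurd h' (Set.disjoint_left.mp hPQ h)
      · rw [Set.mem_singleton_iff] at h'
        exfalso
        have hmem : σ₁ ∈ ({σ₁}ᶜ : Set D₂) := hPQc ▸ (Or.inl (h' ▸ h) : σ₁ ∈ P ∪ Q)
        exact hmem rfl
    · rwa [Set.mem_singleton_iff] at h
  have hw2 : f (ww a) = σ₂ := by
    rcases e3 with h | h
    · rcases e4 with h' | h'
      · exact absurd h' (Set.disjoint_left.mp hRS h)
      · rw [Set.mem_singleton_iff] at h'
        exfalso
        have hmem : σ₂ ∈ ({σ₂}ᶜ : Set D₂) := hRSc ▸ (Or.inl (h' ▸ h) : σ₂ ∈ R ∪ S)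
        exact hmem rfl
    · rwa [Set.mem_singleton_iff] at h
  exact hσ₂σ₁ (hw2 ▸ hw1)

/-- Every (not necessarily continuous) interval-preserving map between
dendrites is of Baire class 1: the preimage of every open set is `F_σ`. -/
theorem stmt_11 {D₁ D₂ : Type*}
    [TopologicalSpace D₁] [CompactSpace D₁] [T2Space D₁] [ConnectedSpace D₁]
    [TopologicalSpace.MetrizableSpace D₁]
    [TopologicalSpace D₂] [CompactSpace D₂] [T2Space D₂] [ConnectedSpace D₂]
    [TopologicalSpace.MetrizableSpace D₂]
    (hsep₁ : ∀ u v : D₁, u ≠ v → ∃ w, Separates w u v)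
    (hsep₂ : ∀ u v : D₂, u ≠ v → ∃ w, Separates w u v)
    (f : D₁ → D₂)
    (hmono : ∀ u w v : D₁, Between u w v → Between (f u) (f w) (f v))
    (O : Set D₂) (hO : IsOpen O) :
    ∃ F : ℕ → Set D₁, (∀ n, IsClosed (F n)) ∧ f ⁻¹' O = ⋃ n, F n := by
  classical
  letI : MetricSpace D₁ := TopologicalSpace.metrizableSpaceMetric D₁
  letI : MetricSpace D₂ := TopologicalSpace.metrizableSpaceMetric D₂
  obtain ⟨K, hKc, hKU⟩ := isOpen_eq_iUnion_closed hO
  have hKsub : ∀ n, K n ⊆ O := by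
    intro n
    rw [hKU]
    exact Set.subset_iUnion K n
  have hJfin : ∀ n, (closure (f ⁻¹' K n) \ f ⁻¹' O).Finite := fun n =>
    key_finite hsep₁ hsep₂ f hmono (hKc n) (hKsub n) hO
  have hLex : ∀ n, ∃ L : ℕ → Set D₁, (∀ m, IsClosed (L m)) ∧
      ((closure (f ⁻¹' K n) \ f ⁻¹' O)ᶜ : Set D₁) = ⋃ m, L m := fun n =>
    isOpen_eq_iUnion_closed (hJfin n).isClosed.isOpen_compl
  choose L hLc hLU using hLex
  refine ⟨fun k => closure (f ⁻¹' K k.unpair.1) ∩ L k.unpair.1 k.unpair.2,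
    fun k => isClosed_closure.inter (hLc _ _), ?_⟩
  ext x
  constructor
  · intro hx
    have hmem : f x ∈ ⋃ n, K n := by rw [← hKU]; exact hx
    obtain ⟨n, hn⟩ := Set.mem_iUnion.mp hmem
    have hxc : x ∈ closure (f ⁻¹' K n) := subset_closure hn
    have hxL : x ∈ ⋃ m, L n m := by
      rw [← hLU n]
      exact fun h => h.2 hx
    obtain ⟨m, hm⟩ := Set.mem_iUnion.mp hxL
    refine Set.mem_iUnion.mpr ⟨Nat.pair n m, ?_⟩
    simp only [Nat.unpair_pair]
    exact ⟨hxc, hm⟩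
  · intro hx
    obtain ⟨k, hxc, hxL⟩ := Set.mem_iUnion.mp hx
    have hmem : x ∈ ((closure (f ⁻¹' K k.unpair.1) \ f ⁻¹' O)ᶜ : Set D₁) := by
      rw [hLU k.unpair.1]
      exact Set.mem_iUnion.mpr ⟨k.unpair.2, hxL⟩
    by_contra hxO
    exact hmem ⟨hxc, hxO⟩
end

section
/- Let X be a median pretree and let f₀, f₁ : X → ℝ be monotone functions (i.e., ⟨u,w,v⟩ implies min(f_i(u), f_i(v)) ≤ f_i(w) ≤ max(f_i(u), f_i(v)) for i = 0, 1). Then the pair {f₀, f₁} is not independent: there do not exist reals a < b such that all four sets f₀⁻¹((-∞,a)) ∩ f₁⁻¹((-∞,a)), f₀⁻¹((-∞,a)) ∩ f₁⁻¹((b,∞)), f₀⁻¹((b,∞)) ∩ f₁⁻¹((-∞,a)), and f₀⁻¹((b,∞)) ∩ f₁⁻¹((b,∞)) are nonempty. -/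
/-- A pretree: a ternary relation `R` satisfying the axioms (B1), (B2), (B3). -/
structure IsPretree {X : Type*} (R : X → X → X → Prop) : Prop where
  b1 : ∀ a b c : X, R a b c → R c b a
  b2 : ∀ a b c : X, (R a b c ∧ R a c b) ↔ b = c
  b3 : ∀ a b c d : X, R a b c → R a b d ∨ R d b c

/-- A median pretree: a pretree in which `[a,b] ∩ [a,c] ∩ [b,c] ≠ ∅` for all `a, b, c`. -/
def IsMedianPretree {X : Type*} (R : X → X → X → Prop) : Prop :=
  IsPretree R ∧ ∀ a b c : X, ∃ m : X, R a m b ∧ R a m c ∧ R b m c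

/-- On a median pretree, no pair of monotone real-valued functions is
independent. -/
theorem stmt_13 {X : Type*} (R : X → X → X → Prop) (hR : IsMedianPretree R)
    (f₀ f₁ : X → ℝ)
    (hmono₀ : ∀ u w v : X, R u w v → min (f₀ u) (f₀ v) ≤ f₀ w ∧ f₀ w ≤ max (f₀ u) (f₀ v))
    (hmono₁ : ∀ u w v : X, R u w v → min (f₁ u) (f₁ v) ≤ f₁ w ∧ f₁ w ≤ max (f₁ u) (f₁ v)) :
    ¬ ∃ a b : ℝ, a < b ∧
      ({x | f₀ x < a} ∩ {x | f₁ x < a}).Nonempty ∧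
      ({x | f₀ x < a} ∩ {x | b < f₁ x}).Nonempty ∧
      ({x | b < f₀ x} ∩ {x | f₁ x < a}).Nonempty ∧
      ({x | b < f₀ x} ∩ {x | b < f₁ x}).Nonempty := by
  rintro ⟨a, b, hab, ⟨p, hp0, hp1⟩, ⟨q, hq0, hq1⟩, ⟨r, hr0, hr1⟩, ⟨s, hs0, hs1⟩⟩
  simp only [Set.mem_setOf_eq] at hp0 hp1 hq0 hq1 hr0 hr1 hs0 hs1
  obtain ⟨hpre, hmed⟩ := hR
  obtain ⟨m, hmpq, hmps, hmqs⟩ := hmed p q s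
  obtain ⟨n, hnpr, hnps, hnrs⟩ := hmed p r s
  have hm0 : f₀ m < a := lt_of_le_of_lt (hmono₀ p m q hmpq).2 (max_lt hp0 hq0)
  have hm1 : b < f₁ m := lt_of_lt_of_le (lt_min hq1 hs1) (hmono₁ q m s hmqs).1
  have hn0 : b < f₀ n := lt_of_lt_of_le (lt_min hr0 hs0) (hmono₀ r n s hnrs).1
  have hn1 : f₁ n < a := lt_of_le_of_lt (hmono₁ p n r hnpr).2 (max_lt hp1 hr1)
  rcases hpre.b3 p m s n hmps with h | h
  · have := (hmono₁ p m n h).2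
    have : f₁ m < a := lt_of_le_of_lt this (max_lt hp1 hn1)
    linarith
  · have := (hmono₀ n m s h).1
    have : b < f₀ m := lt_of_lt_of_le (lt_min hn0 hs0) this
    linarith
end

section
/- Generalized Helly selection principle: Let X be a median pretree and let (f_n)_{n∈ℕ} be a uniformly bounded sequence of monotone real-valued functions on X (i.e., there is C with |f_n(x)| ≤ C for all n and x, and each f_n satisfies: ⟨u,w,v⟩ implies min(f_n(u), f_n(v)) ≤ f_n(w) ≤ max(f_n(u), f_n(v))). Then (f_n) has a subsequence that converges pointwise on X. -/
open Filter Set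

theorem my_inf_ramsey {m : ℕ} (c : ℕ → ℕ → Fin (m+1)) :
    ∃ (i : Fin (m+1)) (g : ℕ → ℕ), StrictMono g ∧ ∀ a b, a < b → c (g a) (g b) = i := by
  classical
  set U : Ultrafilter ℕ := Filter.hyperfilter ℕ with hUdef
  have hcof : ∀ k : ℕ, Set.Ioi k ∈ U := by
    intro k
    have : (Set.Iic k).Finite := Set.finite_Iic k
    have := this.compl_mem_hyperfilter
    simpa [Set.compl_Iic] using this
  have exU : ∀ (d : ℕ → Fin (m+1)), ∃ i, {n | d n = i} ∈ U := by
    intro d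
    by_contra h
    push_neg at h
    have h1 : ∀ i, {n | d n = i}ᶜ ∈ U := fun i =>
      (Ultrafilter.compl_mem_iff_notMem).2 (h i)
    have h2 : (⋂ i, {n | d n = i}ᶜ) ∈ U := (Filter.iInter_mem).2 h1
    obtain ⟨n, hn⟩ := Ultrafilter.nonempty_of_mem h2
    exact (Set.mem_iInter.1 hn (d n)) rfl
  choose col hcol using fun m0 => exU (c m0)
  obtain ⟨i, hi⟩ := exU col
  -- state: (point, set)
  set A : Set ℕ := {m0 | col m0 = i} with hA
  have stepex : ∀ p : ℕ × Set ℕ, p.2 ∈ U → p.2 ⊆ A →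
      ∃ q : ℕ × Set ℕ, q.2 ∈ U ∧ q.2 ⊆ A ∧ p.1 < q.1 ∧ q.1 ∈ p.2 ∧
        q.2 ⊆ {n | c q.1 n = i} ∧ q.2 ⊆ p.2 := by
    rintro ⟨m0, B⟩ hB hBA
    obtain ⟨m', hm'⟩ := Ultrafilter.nonempty_of_mem (U.inter_mem hB (hcof m0))
    have hcolm' : col m' = i := hBA hm'.1
    have hcm' : {n | c m' n = i} ∈ U := by rw [← hcolm']; exact hcol m'
    refine ⟨(m', B ∩ {n | c m' n = i}), U.inter_mem hB hcm', ?_, hm'.2, hm'.1, ?_, ?_⟩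
    · exact fun n hn => hBA hn.1
    · exact fun n hn => hn.2
    · exact fun n hn => hn.1
  let T := {p : ℕ × Set ℕ // p.2 ∈ U ∧ p.2 ⊆ A}
  let F : T → T := fun p =>
    ⟨Classical.choose (stepex p.1 p.2.1 p.2.2),
     ⟨(Classical.choose_spec (stepex p.1 p.2.1 p.2.2)).1,
      (Classical.choose_spec (stepex p.1 p.2.1 p.2.2)).2.1⟩⟩
  have Fspec : ∀ p : T, p.1.1 < (F p).1.1 ∧ (F p).1.1 ∈ p.1.2 ∧
      (F p).1.2 ⊆ {n | c (F p).1.1 n = i} ∧ (F p).1.2 ⊆ p.1.2 := by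
    intro p
    obtain ⟨-, -, h3, h4, h5, h6⟩ := Classical.choose_spec (stepex p.1 p.2.1 p.2.2)
    exact ⟨h3, h4, h5, h6⟩
  let p0 : T := ⟨(0, A), hi, subset_rfl⟩
  let chain : ℕ → T := fun k => F^[k] p0
  have hchain : ∀ k, chain (k+1) = F (chain k) := by
    intro k
    simp only [chain, Function.iterate_succ_apply']
  -- sets decreasing
  have hdec : ∀ k l, k ≤ l → (chain l).1.2 ⊆ (chain k).1.2 := by
    intro k l hkl
    induction l with
    | zero => simp_all
    | succ l ih =>
      rcases Nat.lt_or_ge k (l+1) with h | h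
      · have := (Fspec (chain l)).2.2.2
        rw [← hchain l] at this
        exact this.trans (ih (Nat.lt_succ_iff.1 h))
      · have : k = l + 1 := le_antisymm hkl h
        subst this; rfl
  let g : ℕ → ℕ := fun k => (chain (k+1)).1.1
  have hgmono : StrictMono g := by
    apply strictMono_nat_of_lt_succ
    intro k
    have := (Fspec (chain (k+1))).1
    rw [← hchain (k+1)] at this
    exact this
  refine ⟨i, g, hgmono, ?_⟩
  intro a b hab
  -- g b ∈ (chain (b)).1.2 ⊆ (chain (a+1)).1.2 ⊆ {n | c (g a) n = i}
  have h1 : g b ∈ (chain b).1.2 := by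
    have := (Fspec (chain b)).2.1
    rw [← hchain b] at this
    exact this
  have h2 : (chain b).1.2 ⊆ (chain (a+1)).1.2 := hdec _ _ hab
  have h3 : (chain (a+1)).1.2 ⊆ {n | c (g a) n = i} := by
    have := (Fspec (chain a)).2.2.1
    rw [← hchain a] at this
    exact this
  exact h3 (h2 h1)

section Half
variable {X : Type*} (R : X → X → X → Prop)

/-- Walls in a median pretree are nested. -/
theorem my_nested
    (hb3 : ∀ a b c d : X, R a b c → R a b d ∨ R d b c)
    (hmed : ∀ a b c : X, ∃ m : X, R a m b ∧ R a m c ∧ R b m c)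
    (H K : Set X)
    (hH : ∀ u w v, R u w v → u ∈ H → v ∈ H → w ∈ H)
    (hH' : ∀ u w v, R u w v → u ∉ H → v ∉ H → w ∉ H)
    (hK : ∀ u w v, R u w v → u ∈ K → v ∈ K → w ∈ K)
    (hK' : ∀ u w v, R u w v → u ∉ K → v ∉ K → w ∉ K) :
    (∀ x, ¬(x ∈ H ∧ x ∈ K)) ∨ (∀ x, x ∈ H → x ∈ K) ∨ (∀ x, x ∈ K → x ∈ H) ∨
      (∀ x, x ∈ H ∨ x ∈ K) := by
  by_contra hcon
  push_neg at hcon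
  obtain ⟨⟨a, ha⟩, ⟨b, hbH, hbK⟩, ⟨c, hcK, hcH⟩, ⟨d, hdH, hdK⟩⟩ := hcon
  obtain ⟨m, ham, ham2, hm⟩ := hmed a b c
  have hmH : m ∈ H := hH a m b ham ha.1 hbH
  have hmK : m ∈ K := hK a m c ham2 ha.2 hcK
  obtain ⟨m', hdm', hdm'2, hm'⟩ := hmed d b c
  have hm'K : m' ∉ K := hK' d m' b hdm' hdK hbK
  have hm'H : m' ∉ H := hH' d m' c hdm'2 hdH hcH
  rcases hb3 b m c m' hm with h | h
  · exact hK' b m m' h hbK hm'K hmK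
  · exact hH' m' m c h hm'H hcH hmH

/-- Extraction of a pointwise eventually-constant subsequence from a sequence of halfspaces. -/
theorem my_halfspace_subseq
    (hb3 : ∀ a b c d : X, R a b c → R a b d ∨ R d b c)
    (hmed : ∀ a b c : X, ∃ m : X, R a m b ∧ R a m c ∧ R b m c)
    (H : ℕ → Set X)
    (hH : ∀ n, ∀ u w v, R u w v → u ∈ H n → v ∈ H n → w ∈ H n)
    (hH' : ∀ n, ∀ u w v, R u w v → u ∉ H n → v ∉ H n → w ∉ H n) :
    ∃ t : ℕ → ℕ, StrictMono t ∧
      ∀ x, ∃ b : Prop, ∀ᶠ n in atTop, (x ∈ H (t n) ↔ b) := by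
  classical
  let c : ℕ → ℕ → Fin 4 := fun p q =>
    if ∀ x, ¬(x ∈ H p ∧ x ∈ H q) then 0
    else if ∀ x, x ∈ H p → x ∈ H q then 1
    else if ∀ x, x ∈ H q → x ∈ H p then 2
    else 3
  obtain ⟨i, g, hg, hmono⟩ := my_inf_ramsey c
  have hc3 : ∀ p q, c p q = 3 → ∀ x, x ∈ H p ∨ x ∈ H q := by
    intro p q h x
    have hnest := my_nested R hb3 hmed (H p) (H q) (hH p) (hH' p) (hH q) (hH' q)
    simp only [c] at h
    split_ifs at h with h1 h2 h3
    · exact absurd h (by decide)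
    · exact absurd h (by decide)
    · exact absurd h (by decide)
    · rcases hnest with h' | h' | h' | h'
      · exact absurd h' h1
      · exact absurd h' h2
      · exact absurd h' h3
      · exact h' x
  refine ⟨g, hg, ?_⟩
  intro x
  fin_cases i
  · -- disjoint: eventually x ∉ H (g n)
    refine ⟨False, ?_⟩
    by_cases hx : ∃ p, x ∈ H (g p)
    · obtain ⟨p, hp⟩ := hx
      filter_upwards [eventually_gt_atTop p] with n hn
      simp only [iff_false]
      intro hxn
      have h := hmono p n hn
      simp only [c] at h
      split_ifs at h with h1 h2 h3
      · exact h1 x ⟨hp, hxn⟩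
      all_goals exact absurd h (by decide)
    · push_neg at hx
      exact Filter.Eventually.of_forall fun n => by simp [hx n]
  · -- increasing
    refine ⟨∃ p, x ∈ H (g p), ?_⟩
    by_cases hx : ∃ p, x ∈ H (g p)
    · obtain ⟨p, hp⟩ := hx
      filter_upwards [eventually_gt_atTop p] with n hn
      have h := hmono p n hn
      simp only [c] at h
      split_ifs at h with h1 h2 h3
      · exact absurd h (by decide)
      · exact iff_of_true (h2 x hp) ⟨p, hp⟩
      · exact absurd h (by decide)
      · exact absurd h (by decide)
    · push_neg at hx
      refine Filter.Eventually.of_forall fun n => iff_of_false (hx n) ?_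
      rintro ⟨p, hp⟩; exact hx p hp
  · -- decreasing
    refine ⟨∀ p, x ∈ H (g p), ?_⟩
    by_cases hx : ∀ p, x ∈ H (g p)
    · exact Filter.Eventually.of_forall fun n => iff_of_true (hx n) hx
    · push_neg at hx
      obtain ⟨p, hp⟩ := hx
      filter_upwards [eventually_gt_atTop p] with n hn
      have h := hmono p n hn
      simp only [c] at h
      split_ifs at h with h1 h2 h3
      · exact absurd h (by decide)
      · exact absurd h (by decide)
      · exact iff_of_false (fun hxn => hp (h3 x hxn)) (fun hall => hp (hall p))
      · exact absurd h (by decide)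
  · -- covering: eventually x ∈ H (g n)
    refine ⟨True, ?_⟩
    by_cases hx : ∃ p, x ∉ H (g p)
    · obtain ⟨p, hp⟩ := hx
      filter_upwards [eventually_gt_atTop p] with n hn
      simp only [iff_true]
      rcases hc3 (g p) (g n) (hmono p n hn) x with h | h
      · exact absurd h hp
      · exact h
    · push_neg at hx
      exact Filter.Eventually.of_forall fun n => by simp [hx n]
end Half
/-- **generalized Helly selection principle.** A uniformly bounded sequence of
monotone real-valued functions on a median pretree has a pointwise convergent subsequence. -/
theorem stmt_14 {X : Type*} (R : X → X → X → Prop) (hR : IsMedianPretree R)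
    (f : ℕ → X → ℝ) (C : ℝ) (hbd : ∀ n x, |f n x| ≤ C)
    (hmono : ∀ n, ∀ u w v : X, R u w v →
      min (f n u) (f n v) ≤ f n w ∧ f n w ≤ max (f n u) (f n v)) :
    ∃ σ : ℕ → ℕ, StrictMono σ ∧
      ∀ x : X, ∃ L : ℝ, Filter.Tendsto (fun n => f (σ n) x) Filter.atTop (nhds L) := by
  classical
  obtain ⟨hpre, hmed⟩ := hR
  obtain ⟨e, he⟩ := exists_surjective_nat ℚ
  -- extraction operator for a single rational cut
  have Ext : ∀ (q : ℚ) (s : ℕ → ℕ), ∃ t : ℕ → ℕ, StrictMono t ∧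
      ∀ x, ∃ b : Prop, ∀ᶠ n in Filter.atTop, ((f (s (t n)) x ≤ (q : ℝ)) ↔ b) :=
    fun q s => my_halfspace_subseq R hpre.b3 hmed (fun n => {x | f (s n) x ≤ (q : ℝ)})
      (fun n u w v h hu hv => le_trans (hmono (s n) u w v h).2 (max_le hu hv))
      (fun n u w v h hu hv hw => absurd hw (not_le.2
        (lt_of_lt_of_le (lt_min (not_le.1 hu) (not_le.1 hv)) (hmono (s n) u w v h).1)))
  -- iterated extraction
  let step : ℕ → {s : ℕ → ℕ // StrictMono s} → {s : ℕ → ℕ // StrictMono s} := fun i s =>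
    ⟨s.1 ∘ Classical.choose (Ext (e i) s.1),
      s.2.comp (Classical.choose_spec (Ext (e i) s.1)).1⟩
  let chain : ℕ → {s : ℕ → ℕ // StrictMono s} := fun i =>
    Nat.rec ⟨id, strictMono_id⟩ (fun i s => step i s) i
  have hchain : ∀ i, chain (i + 1) = step i (chain i) := fun i => rfl
  have hP : ∀ i x, ∃ b : Prop, ∀ᶠ n in Filter.atTop,
      ((f ((chain (i + 1)).1 n) x ≤ (e i : ℝ)) ↔ b) := by
    intro i x
    exact (Classical.choose_spec (Ext (e i) (chain i).1)).2 x
  -- comparing stages of the chain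
  have hcomp : ∀ i j, i ≤ j → ∃ u : ℕ → ℕ, StrictMono u ∧ (chain j).1 = (chain i).1 ∘ u := by
    intro i j hij
    induction j with
    | zero =>
      obtain rfl : i = 0 := Nat.le_zero.1 hij
      exact ⟨id, strictMono_id, rfl⟩
    | succ j ih =>
      rcases Nat.lt_or_ge i (j + 1) with h | h
      · obtain ⟨u, hu, hcu⟩ := ih (Nat.lt_succ_iff.1 h)
        refine ⟨u ∘ Classical.choose (Ext (e j) (chain j).1),
          hu.comp (Classical.choose_spec (Ext (e j) (chain j).1)).1, ?_⟩
        rw [hchain j]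
        show (chain j).1 ∘ _ = _
        rw [hcu]
        rfl
      · obtain rfl : i = j + 1 := le_antisymm hij h
        exact ⟨id, strictMono_id, rfl⟩
  -- diagonal sequence
  let d : ℕ → ℕ := fun n => (chain n).1 n
  have hd : StrictMono d := by
    apply strictMono_nat_of_lt_succ
    intro n
    have h1 : (chain (n + 1)).1 (n + 1) = (chain n).1
        (Classical.choose (Ext (e n) (chain n).1) (n + 1)) := by
      rw [hchain n]; rfl
    have h2 : n + 1 ≤ Classical.choose (Ext (e n) (chain n).1) (n + 1) :=
      (Classical.choose_spec (Ext (e n) (chain n).1)).1.le_apply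
    calc (chain n).1 n < (chain n).1 (n + 1) := (chain n).2 (Nat.lt_succ_self n)
      _ ≤ (chain n).1 (Classical.choose (Ext (e n) (chain n).1) (n + 1)) :=
          (chain n).2.monotone h2
      _ = (chain (n + 1)).1 (n + 1) := h1.symm
  -- eventual constancy of each rational cut along the diagonal
  have hevd : ∀ i x, ∃ b : Prop, ∀ᶠ n in Filter.atTop, ((f (d n) x ≤ (e i : ℝ)) ↔ b) := by
    intro i x
    obtain ⟨b, hb⟩ := hP i x
    rw [Filter.eventually_atTop] at hb
    obtain ⟨N, hN⟩ := hb
    refine ⟨b, Filter.eventually_atTop.2 ⟨max (i + 1) N, fun n hn => ?_⟩⟩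
    obtain ⟨u, hu, hcu⟩ := hcomp (i + 1) n (le_trans (le_max_left _ _) hn)
    have : d n = (chain (i + 1)).1 (u n) := by simp only [d, hcu]; rfl
    rw [this]
    exact hN (u n) (le_trans (le_trans (le_max_right _ _) hn) hu.le_apply)
  refine ⟨d, hd, ?_⟩
  intro x
  set a : ℕ → ℝ := fun n => f (d n) x with ha
  have hble : Filter.IsBoundedUnder (· ≤ ·) Filter.atTop a :=
    Filter.isBoundedUnder_of ⟨C, fun n => (abs_le.1 (hbd (d n) x)).2⟩
  have hbge : Filter.IsBoundedUnder (· ≥ ·) Filter.atTop a :=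
    Filter.isBoundedUnder_of ⟨-C, fun n => (abs_le.1 (hbd (d n) x)).1⟩
  have heq : Filter.liminf a Filter.atTop = Filter.limsup a Filter.atTop := by
    by_contra hne
    have hlt : Filter.liminf a Filter.atTop < Filter.limsup a Filter.atTop :=
      lt_of_le_of_ne (Filter.liminf_le_limsup hble hbge) hne
    obtain ⟨p, hp1, hp2⟩ := exists_rat_btwn hlt
    obtain ⟨i, rfl⟩ := he p
    obtain ⟨b, hb⟩ := hevd i x
    have hf1 : ∃ᶠ n in Filter.atTop, a n < (e i : ℝ) :=
      Filter.frequently_lt_of_liminf_lt hble.isCoboundedUnder_ge hp1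
    have hf2 : ∃ᶠ n in Filter.atTop, (e i : ℝ) < a n :=
      Filter.frequently_lt_of_lt_limsup hbge.isCoboundedUnder_le hp2
    obtain ⟨n1, hn1, hn1'⟩ := (hf1.and_eventually hb).exists
    obtain ⟨n2, hn2, hn2'⟩ := (hf2.and_eventually hb).exists
    exact (hn2'.2 (hn1'.1 hn1.le)).not_gt hn2
  exact ⟨Filter.limsup a Filter.atTop,
    tendsto_of_liminf_eq_limsup heq rfl hble hbge⟩
end
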